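/- arXiv:1705.01141 — 9 statements merged into one kernel-verified Lean document; each statement's English description precedes it below -/
import Mathlib

section
/- The subalgebra of ρ-invariants {f ∈ R : ρ(f) = f} equals the (ZMod 2)-subalgebra of R generated by the three elements a, b₊ and b₋ (i.e., it equals Algebra.adjoin (ZMod 2) {a, b₊, b₋}). -/
open MvPolynomial

/-- `a = x₁² + x₁x₂ + x₂²` in `(ZMod 2)[x₁, x₂]`. -/
noncomputable def aA4 : MvPolynomial (Fin 2) (ZMod 2) :=
  X 0 ^ 2 + X 0 * X 1 + X 1 ^ 2

/-- `b₊ = x₁³ + x₁²x₂ + x₂³` in `(ZMod 2)[x₁, x₂]`. -/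
noncomputable def bPlus : MvPolynomial (Fin 2) (ZMod 2) :=
  X 0 ^ 3 + X 0 ^ 2 * X 1 + X 1 ^ 3

/-- `b₋ = x₁³ + x₁x₂² + x₂³` in `(ZMod 2)[x₁, x₂]`. -/
noncomputable def bMinus : MvPolynomial (Fin 2) (ZMod 2) :=
  X 0 ^ 3 + X 0 * X 1 ^ 2 + X 1 ^ 3

/-- The `(ZMod 2)`-algebra endomorphism `ρ` of `(ZMod 2)[x₁, x₂]` determined by
`ρ(x₁) = x₂` and `ρ(x₂) = x₁ + x₂`. -/
noncomputable def rhoA4 :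
    MvPolynomial (Fin 2) (ZMod 2) →ₐ[ZMod 2] MvPolynomial (Fin 2) (ZMod 2) :=
  aeval ![X 1, X 0 + X 1]

/-!
The transfer `π = 1 + ρ + ρ²` is the identity on invariants, because `3 = 1` in characteristic 2,
so it suffices that `π` maps `R` into `S = 𝔽₂[a, b₊, b₋]`. As `ρ` fixes `a, b₊, b₋`, `π` is
`S`-linear. Both `x₁` and `x₂` are roots of `(T + x₁)(T + x₂)(T + x₁ + x₂) = T³ + aT + (b₊ + b₋)`,
so `R` is spanned over `S` by the monomials `x₁ⁱx₂ʲ` with `i, j < 3`, and on these nine monomials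
`π` takes the values `1, 0, a, b₊, b₋, a²`.
-/

section Transfer

variable {A F : Type*} [CommRing A] [FunLike F A A] (σ : F)

def transfer (f : A) : A := f + σ f + σ (σ f)

lemma transfer_eq_self_of_map_eq [CharP A 2] {f : A} (hf : σ f = f) : transfer σ f = f := by
  rw [transfer, hf, hf, CharTwo.add_self_eq_zero, zero_add]

variable [RingHomClass F A A]

lemma transfer_zero : transfer σ (0 : A) = 0 := by
  simp [transfer]

lemma transfer_add (f g : A) : transfer σ (f + g) = transfer σ f + transfer σ g := by
  simp only [transfer, map_add]
  abel

lemma transfer_mul_of_map_eq {u : A} (hu : σ u = u) (f : A) :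
    transfer σ (u * f) = u * transfer σ f := by
  simp only [transfer, map_mul, hu]
  ring

end Transfer

lemma Subalgebra.mul_mem_span {R A : Type*} [CommSemiring R] [CommSemiring A] [Algebra R A]
    {S : Subalgebra R A} {t : Set A} {s m : A} (hs : s ∈ S) (hm : m ∈ Submodule.span S t) :
    s * m ∈ Submodule.span S t := by
  simpa only [Subalgebra.smul_def, smul_eq_mul] using Submodule.smul_mem _ (⟨s, hs⟩ : S) hm

noncomputable def adjoinGenerators : Subalgebra (ZMod 2) (MvPolynomial (Fin 2) (ZMod 2)) :=
  Algebra.adjoin (ZMod 2) {aA4, bPlus, bMinus}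

lemma aA4_mem_adjoinGenerators : aA4 ∈ adjoinGenerators := Algebra.subset_adjoin (by simp)

lemma bPlus_mem_adjoinGenerators : bPlus ∈ adjoinGenerators := Algebra.subset_adjoin (by simp)

lemma bMinus_mem_adjoinGenerators : bMinus ∈ adjoinGenerators := Algebra.subset_adjoin (by simp)

@[simp] lemma rhoA4_X_zero : rhoA4 (X 0) = X 1 := by simp [rhoA4]

@[simp] lemma rhoA4_X_one : rhoA4 (X 1) = X 0 + X 1 := by simp [rhoA4]

lemma rhoA4_aA4 : rhoA4 aA4 = aA4 := by simp [aA4]; grind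

lemma rhoA4_bPlus : rhoA4 bPlus = bPlus := by simp [bPlus]; grind

lemma rhoA4_bMinus : rhoA4 bMinus = bMinus := by simp [bMinus]; grind

lemma adjoinGenerators_le_equalizer_rhoA4 :
    adjoinGenerators ≤ AlgHom.equalizer rhoA4 (AlgHom.id _ _) := by
  refine Algebra.adjoin_le ?_
  rintro g (rfl | rfl | rfl)
  exacts [rhoA4_aA4, rhoA4_bPlus, rhoA4_bMinus]

lemma X_zero_pow_three :
    (X 0 : MvPolynomial (Fin 2) (ZMod 2)) ^ 3 = aA4 * X 0 + (bPlus + bMinus) := by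
  simp only [aA4, bPlus, bMinus]; grind

lemma X_one_pow_three :
    (X 1 : MvPolynomial (Fin 2) (ZMod 2)) ^ 3 = aA4 * X 1 + (bPlus + bMinus) := by
  simp only [aA4, bPlus, bMinus]; grind

def smallMonomials : Set (MvPolynomial (Fin 2) (ZMod 2)) :=
  {f | ∃ i < 3, ∃ j < 3, X 0 ^ i * X 1 ^ j = f}

lemma X_pow_mul_X_pow_mem_span_smallMonomials (i j : ℕ) :
    X 0 ^ i * X 1 ^ j ∈ Submodule.span adjoinGenerators smallMonomials := by
  have hc : bPlus + bMinus ∈ adjoinGenerators :=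
    add_mem bPlus_mem_adjoinGenerators bMinus_mem_adjoinGenerators
  induction i using Nat.strong_induction_on generalizing j with | _ i ihi =>
  induction j using Nat.strong_induction_on with | _ j ihj =>
  by_cases hi : i < 3
  · by_cases hj : j < 3
    · exact Submodule.subset_span ⟨i, hi, j, hj, rfl⟩
    obtain ⟨j, rfl⟩ : ∃ j', j = j' + 3 := ⟨j - 3, by omega⟩
    rw [show X 0 ^ i * X 1 ^ (j + 3) = aA4 * (X 0 ^ i * X 1 ^ (j + 1)) +
        (bPlus + bMinus) * (X 0 ^ i * X 1 ^ j) by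
      linear_combination X 0 ^ i * X 1 ^ j * X_one_pow_three]
    exact add_mem (Subalgebra.mul_mem_span aA4_mem_adjoinGenerators (ihj _ (by omega)))
      (Subalgebra.mul_mem_span hc (ihj _ (by omega)))
  obtain ⟨i, rfl⟩ : ∃ i', i = i' + 3 := ⟨i - 3, by omega⟩
  rw [show X 0 ^ (i + 3) * X 1 ^ j = aA4 * (X 0 ^ (i + 1) * X 1 ^ j) +
      (bPlus + bMinus) * (X 0 ^ i * X 1 ^ j) by
    linear_combination X 0 ^ i * X 1 ^ j * X_zero_pow_three]
  exact add_mem (Subalgebra.mul_mem_span aA4_mem_adjoinGenerators (ihi _ (by omega) j))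
    (Subalgebra.mul_mem_span hc (ihi _ (by omega) j))

lemma span_smallMonomials : Submodule.span adjoinGenerators smallMonomials = ⊤ := by
  refine Submodule.eq_top_iff'.mpr fun f ↦ ?_
  induction f using MvPolynomial.induction_on' with
  | monomial d r =>
    rw [monomial_eq, Finsupp.prod_fintype _ _ (fun _ ↦ pow_zero _), Fin.prod_univ_two,
      ← smul_eq_C_mul]
    exact Submodule.smul_of_tower_mem _ r (X_pow_mul_X_pow_mem_span_smallMonomials _ _)
  | add p q hp hq => exact add_mem hp hq

lemma transfer_rhoA4_mem_of_mem_smallMonomials {f : MvPolynomial (Fin 2) (ZMod 2)}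
    (hf : f ∈ smallMonomials) : transfer rhoA4 f ∈ adjoinGenerators := by
  obtain ⟨i, hi, j, hj, rfl⟩ := hf
  interval_cases i <;> interval_cases j
  · convert one_mem adjoinGenerators using 1; simp [transfer]; grind
  · convert zero_mem adjoinGenerators using 1; simp [transfer]; grind
  · convert zero_mem adjoinGenerators using 1; simp [transfer]; grind
  · convert zero_mem adjoinGenerators using 1; simp [transfer]; grind
  · convert aA4_mem_adjoinGenerators using 1; simp [transfer, aA4]; grind
  · convert bMinus_mem_adjoinGenerators using 1; simp [transfer, bMinus]; grind
  · convert zero_mem adjoinGenerators using 1; simp [transfer]; grind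
  · convert bPlus_mem_adjoinGenerators using 1; simp [transfer, bPlus]; grind
  · convert pow_mem aA4_mem_adjoinGenerators 2 using 1; simp [transfer, aA4]; grind

lemma transfer_rhoA4_mem_adjoinGenerators (f : MvPolynomial (Fin 2) (ZMod 2)) :
    transfer rhoA4 f ∈ adjoinGenerators := by
  have hf : f ∈ Submodule.span adjoinGenerators smallMonomials :=
    span_smallMonomials ▸ Submodule.mem_top
  induction hf using Submodule.span_induction with
  | mem g hg => exact transfer_rhoA4_mem_of_mem_smallMonomials hg
  | zero => rw [transfer_zero]; exact zero_mem _
  | add g h _ _ hg hh => rw [transfer_add]; exact add_mem hg hh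
  | smul s g _ hg =>
    rw [Subalgebra.smul_def, smul_eq_mul,
      transfer_mul_of_map_eq _ (adjoinGenerators_le_equalizer_rhoA4 s.2)]
    exact mul_mem s.2 hg

/-- The subalgebra of `ρ`-invariants equals the `(ZMod 2)`-subalgebra generated
by `a`, `b₊` and `b₋` (the mod-2 cohomology of the alternating group `A₄`). -/
theorem stmt2 :
    AlgHom.equalizer rhoA4 (AlgHom.id (ZMod 2) (MvPolynomial (Fin 2) (ZMod 2))) =
      Algebra.adjoin (ZMod 2) {aA4, bPlus, bMinus} := by
  refine le_antisymm (fun f hf ↦ ?_) adjoinGenerators_le_equalizer_rhoA4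
  rw [← transfer_eq_self_of_map_eq rhoA4 hf]
  exact transfer_rhoA4_mem_adjoinGenerators f
end

section
/- Let τ be the (ZMod 2)-algebra automorphism of R with τ(x₁) = x₂ and τ(x₂) = x₁. Then τ(a) = a and τ(b₊) = b₋. Moreover, for every natural number p and every n ≥ 1, setting f = a^p · Σ_{i : 2i < n} C(n,i)·b₊^i·b₋^(n−i), one has f + τ(f) = a^p·(b₊ + b₋)^n. -/
open MvPolynomial

/-- The `(ZMod 2)`-algebra automorphism `τ` of `(ZMod 2)[x₁, x₂]` exchanging
`x₁` and `x₂`. -/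
noncomputable def tauA4 :
    MvPolynomial (Fin 2) (ZMod 2) ≃ₐ[ZMod 2] MvPolynomial (Fin 2) (ZMod 2) :=
  renameEquiv (ZMod 2) (Equiv.swap (0 : Fin 2) 1)


lemma tau_a : tauA4 aA4 = aA4 := by
  simp only [tauA4, aA4, renameEquiv_apply, map_add, map_mul, map_pow, rename_X,
    Equiv.swap_apply_left, Equiv.swap_apply_right]
  ring

lemma tau_bp : tauA4 bPlus = bMinus := by
  simp only [tauA4, bPlus, bMinus, renameEquiv_apply, map_add, map_mul, map_pow, rename_X,
    Equiv.swap_apply_left, Equiv.swap_apply_right]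
  ring

lemma tau_bm : tauA4 bMinus = bPlus := by
  simp only [tauA4, bPlus, bMinus, renameEquiv_apply, map_add, map_mul, map_pow, rename_X,
    Equiv.swap_apply_left, Equiv.swap_apply_right]
  ring

lemma central_zero (m : ℕ) (hm : 1 ≤ m) :
    ((Nat.choose (2 * m) m : ℕ) : MvPolynomial (Fin 2) (ZMod 2)) = 0 := by
  obtain ⟨k, rfl⟩ := Nat.exists_eq_add_of_le hm
  have h : Nat.choose (2 * (1 + k)) (1 + k)
      = Nat.choose (2 * k + 1) k + Nat.choose (2 * k + 1) (k + 1) := by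
    rw [show 2 * (1 + k) = (2 * k + 1) + 1 by ring, show 1 + k = k + 1 by ring,
      Nat.choose_succ_succ]
  have hs : Nat.choose (2 * k + 1) (k + 1) = Nat.choose (2 * k + 1) k := by
    have := Nat.choose_symm (n := 2 * k + 1) (k := k + 1) (by omega)
    simpa [show 2 * k + 1 - (k + 1) = k by omega] using this.symm
  rw [h, hs, Nat.cast_add]
  exact CharTwo.add_self_eq_zero _

/-- `τ(a) = a`, `τ(b₊) = b₋`, and for `f = aᵖ · Σ_{2i<n} C(n,i) b₊ⁱ b₋ⁿ⁻ⁱ` one has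
`f + τ(f) = aᵖ (b₊ + b₋)ⁿ` (the transfer computation for `γ₁,₂ᵖ γ₂,₁ⁿ`). -/
theorem stmt5 :
    tauA4 aA4 = aA4 ∧ tauA4 bPlus = bMinus ∧
      ∀ (p n : ℕ), 1 ≤ n →
        (aA4 ^ p * ∑ i ∈ (Finset.range n).filter (fun i => 2 * i < n),
            (Nat.choose n i : MvPolynomial (Fin 2) (ZMod 2)) *
              bPlus ^ i * bMinus ^ (n - i)) +
          tauA4 (aA4 ^ p * ∑ i ∈ (Finset.range n).filter (fun i => 2 * i < n),
            (Nat.choose n i : MvPolynomial (Fin 2) (ZMod 2)) *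
              bPlus ^ i * bMinus ^ (n - i)) =
        aA4 ^ p * (bPlus + bMinus) ^ n := by
  refine ⟨tau_a, tau_bp, ?_⟩
  intro p n hn
  rw [map_mul, map_pow, tau_a, map_sum, ← mul_add]
  congr 1
  have hτt : ∀ i ∈ (Finset.range n).filter (fun i => 2 * i < n),
      tauA4 ((Nat.choose n i : MvPolynomial (Fin 2) (ZMod 2)) * bPlus ^ i * bMinus ^ (n - i))
        = (Nat.choose n i : MvPolynomial (Fin 2) (ZMod 2)) * bMinus ^ i * bPlus ^ (n - i) := by
    intro i _
    rw [map_mul, map_mul, map_pow, map_pow, tau_bp, tau_bm, map_natCast]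
  rw [Finset.sum_congr rfl hτt]
  have hre : ∑ i ∈ (Finset.range n).filter (fun i => 2 * i < n),
      (Nat.choose n i : MvPolynomial (Fin 2) (ZMod 2)) * bMinus ^ i * bPlus ^ (n - i)
    = ∑ j ∈ (Finset.range (n+1)).filter (fun j => n < 2 * j),
      (Nat.choose n j : MvPolynomial (Fin 2) (ZMod 2)) * bPlus ^ j * bMinus ^ (n - j) := by
    apply Finset.sum_nbij' (fun i => n - i) (fun j => n - j)
    · intro a ha
      simp only [Finset.mem_filter, Finset.mem_range] at ha ⊢
      omega
    · intro b hb
      simp only [Finset.mem_filter, Finset.mem_range] at hb ⊢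
      omega
    · intro a ha
      simp only [Finset.mem_filter, Finset.mem_range] at ha
      omega
    · intro b hb
      simp only [Finset.mem_filter, Finset.mem_range] at hb
      omega
    · intro a ha
      simp only [Finset.mem_filter, Finset.mem_range] at ha
      rw [Nat.choose_symm (by omega), show n - (n - a) = a by omega]
      ring
  rw [hre]
  -- binomial theorem
  rw [add_pow]
  have hB : ∀ i ∈ Finset.range (n+1),
      bPlus ^ i * bMinus ^ (n - i) * (Nat.choose n i : MvPolynomial (Fin 2) (ZMod 2))
        = (Nat.choose n i : MvPolynomial (Fin 2) (ZMod 2)) * bPlus ^ i * bMinus ^ (n - i) := by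
    intro i _; ring
  rw [Finset.sum_congr rfl hB]
  rw [← Finset.sum_filter_add_sum_filter_not (Finset.range (n+1)) (fun i => 2 * i < n)]
  congr 1
  · apply Finset.sum_congr
    · ext i
      simp only [Finset.mem_filter, Finset.mem_range]
      omega
    · intro _ _; rfl
  · apply Finset.sum_subset
    · intro x hx
      simp only [Finset.mem_filter, Finset.mem_range] at hx ⊢
      omega
    · intro x hx hnx
      simp only [Finset.mem_filter, Finset.mem_range] at hx hnx
      have hxe : n = 2 * x := by omega
      have : ((Nat.choose n x : ℕ) : MvPolynomial (Fin 2) (ZMod 2)) = 0 := by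
        rw [hxe]; exact central_zero x (by omega)
      rw [this, zero_mul, zero_mul]
end

section
/- Let m ≥ 1 and let φ : MvPolynomial (Fin m) (ZMod 2) → MvPolynomial (Fin (m−1)) (ZMod 2) be the (ZMod 2)-algebra homomorphism determined by φ(Xᵢ) = Yᵢ for i < m−1 and φ(X_{m−1}) = Y₀ + Y₁ + ⋯ + Y_{m−2}. Then for every i with 1 ≤ i ≤ m, φ(eᵢ) = eᵢ + e_{i−1}·e₁, where eⱼ denotes the j-th elementary symmetric polynomial (MvPolynomial.esymm) in the appropriate set of variables, with the conventions e₀ = 1 and eⱼ = 0 when j exceeds the number of variables. -/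
open MvPolynomial

/-- The `(ZMod 2)`-algebra map `φ : (ZMod 2)[X₀,…,X_{m−1}] → (ZMod 2)[Y₀,…,Y_{m−2}]`
with `φ(Xᵢ) = Yᵢ` for `i < m − 1` and `φ(X_{m−1}) = Y₀ + ⋯ + Y_{m−2}`. -/
noncomputable def restrictToAV (m : ℕ) :
    MvPolynomial (Fin m) (ZMod 2) →ₐ[ZMod 2] MvPolynomial (Fin (m - 1)) (ZMod 2) :=
  aeval (fun k : Fin m =>
    if h : (k : ℕ) < m - 1 then (X ⟨k, h⟩ : MvPolynomial (Fin (m - 1)) (ZMod 2))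
    else ∑ j : Fin (m - 1), X j)

lemma multiset_esymm_cons {R : Type*} [CommSemiring R] (a : R) (s : Multiset R) (n : ℕ) :
    (a ::ₘ s).esymm (n + 1) = s.esymm (n + 1) + a * s.esymm n := by
  rw [Multiset.esymm, Multiset.powersetCard_cons, Multiset.map_add, Multiset.sum_add,
    Multiset.map_map]
  congr 1
  rw [Multiset.esymm, ← Multiset.sum_map_mul_left]
  congr 1
  apply Multiset.map_congr rfl
  intro t _
  simp

/-- For `1 ≤ i ≤ m`, `φ(eᵢ) = eᵢ + e_{i−1}·e₁`, where `eⱼ` is the `j`-th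
elementary symmetric polynomial (with `e₀ = 1` and `eⱼ = 0` for `j` exceeding
the number of variables). -/
theorem stmt6 (m : ℕ) (hm : 1 ≤ m) :
    ∀ i : ℕ, 1 ≤ i → i ≤ m →
      restrictToAV m (esymm (Fin m) (ZMod 2) i) =
        esymm (Fin (m - 1)) (ZMod 2) i +
          esymm (Fin (m - 1)) (ZMod 2) (i - 1) * esymm (Fin (m - 1)) (ZMod 2) 1 := by
  obtain ⟨n, rfl⟩ : ∃ n, m = n + 1 := ⟨m - 1, (Nat.succ_pred_eq_of_pos hm).symm⟩
  intro i hi _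
  obtain ⟨j, rfl⟩ : ∃ j, i = j + 1 := ⟨i - 1, (Nat.succ_pred_eq_of_pos hi).symm⟩
  rw [restrictToAV, aeval_esymm_eq_multiset_esymm]
  have hf : (Finset.univ.val.map (fun k : Fin (n + 1) =>
      if h : (k : ℕ) < n + 1 - 1 then (X ⟨k, h⟩ : MvPolynomial (Fin (n + 1 - 1)) (ZMod 2))
      else ∑ j : Fin (n + 1 - 1), X j)) =
      (∑ j : Fin n, (X j : MvPolynomial (Fin n) (ZMod 2))) ::ₘ
        Finset.univ.val.map (X : Fin n → MvPolynomial (Fin n) (ZMod 2)) := by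
    rw [Fin.univ_castSuccEmb, Finset.cons_val, Multiset.map_cons, Finset.map_val,
      Multiset.map_map]
    congr 1
    · simp [Fin.last]
    · apply Multiset.map_congr rfl
      intro k _
      have hk : ((Fin.castSuccEmb k : Fin (n + 1)) : ℕ) = (k : ℕ) := rfl
      simp only [Function.comp_apply, hk, Fin.eta]
      exact dif_pos k.is_lt
  have h1 : (Finset.univ.val.map (X : Fin n → MvPolynomial (Fin n) (ZMod 2))).esymm 1 =
      ∑ j : Fin n, (X j : MvPolynomial (Fin n) (ZMod 2)) := by
    rw [← esymm_eq_multiset_esymm]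
    exact esymm_one _ _
  rw [hf, multiset_esymm_cons, esymm_eq_multiset_esymm]
  simp only [Nat.add_sub_cancel, h1]
  ring
end

section
/- Let m ≥ 2. In MvPolynomial (Fin (m−1)) (ZMod 2), the family of m−1 polynomials p_k = e_k + e_{k−1}·e₁ for k = 2, 3, …, m is algebraically independent over ZMod 2, where eⱼ denotes the j-th elementary symmetric polynomial (MvPolynomial.esymm) in the m−1 variables, with the conventions e₀ = 1 and e_m = 0 (since there are only m−1 variables). -/
open MvPolynomial

/-!
Since `e₁, …, e_{m-1}` are algebraically independent, it suffices to treat the universal case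
`q_k = X_{k+1} + X_k X_0` (with `X_{n+1} = 0`) in `R[X_0, …, X_n]`. With `h_0 = X_0` and
`h_{k+1} = h_k X_0 - X_{k+1}`, the substitution `X_k ↦ -h_k` sends `q_k` to `X_{k+1}` for `k < n`
and `q_n` to `h_n X_0`. The latter is monic of positive degree in `X_0` over `R[X_1, …, X_n]`,
hence transcendental over it, so the images of the `q_k` are algebraically independent, and
therefore so are the `q_k`.
-/

namespace MvPolynomial

variable {R : Type*} [CommRing R] {n : ℕ}

theorem algebraicIndependent_cons_X_succ {f : MvPolynomial (Fin (n + 1)) R}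
    (hf : Transcendental (MvPolynomial (Fin n) R) (finSuccEquiv R n f)) :
    AlgebraicIndependent R (Fin.cons f fun i : Fin n ↦ X i.succ) := by
  have hcomm : (finSuccEquiv R n).toAlgHom.comp (aeval (Fin.cons f fun i : Fin n ↦ X i.succ)) =
      ((Polynomial.aeval (finSuccEquiv R n f)).restrictScalars R).comp
        (finSuccEquiv R n).toAlgHom := by
    refine algHom_ext fun k ↦ ?_
    cases k using Fin.cases <;> simp [finSuccEquiv_X_zero, finSuccEquiv_X_succ]
  have hinj : Function.Injective ((finSuccEquiv R n).toAlgHom.comp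
      (aeval (Fin.cons f fun i : Fin n ↦ X i.succ))) := by
    rw [hcomm]
    exact (transcendental_iff_injective.mp hf).comp (finSuccEquiv R n).injective
  rw [algebraicIndependent_iff_injective_aeval]
  exact Function.Injective.of_comp (f := finSuccEquiv R n) hinj

/-- `hornerX0 R n k = X 0 ^ (k + 1) - ∑ i ∈ [1, k], X i * X 0 ^ (k - i)`, computed by Horner's rule. -/
noncomputable def hornerX0 (R : Type*) [CommRing R] (n : ℕ) :
    Fin (n + 1) → MvPolynomial (Fin (n + 1)) R :=
  Fin.induction (X 0) fun i h ↦ h * X 0 - X i.succ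

@[simp] theorem hornerX0_zero : hornerX0 R n 0 = X 0 := rfl

@[simp] theorem hornerX0_succ (i : Fin n) :
    hornerX0 R n i.succ = hornerX0 R n i.castSucc * X 0 - X i.succ := rfl

theorem monic_finSuccEquiv_hornerX0 [Nontrivial R] (k : Fin (n + 1)) :
    (finSuccEquiv R n (hornerX0 R n k)).Monic := by
  induction k using Fin.induction with
  | zero => simp [finSuccEquiv_X_zero]
  | succ i ih =>
    have hX : (finSuccEquiv R n (hornerX0 R n i.castSucc) * Polynomial.X).Monic :=
      ih.mul Polynomial.monic_X
    rw [hornerX0_succ, map_sub, map_mul, finSuccEquiv_X_zero, finSuccEquiv_X_succ]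
    refine hX.sub_of_left (Polynomial.degree_C_le.trans_lt ?_)
    rw [← Polynomial.natDegree_pos_iff_degree_pos, Polynomial.natDegree_mul_X ih.ne_zero]
    exact Nat.succ_pos _

theorem algebraicIndependent_snoc_X_succ_add_X_mul_X_zero [Nontrivial R] :
    AlgebraicIndependent R fun k : Fin (n + 1) ↦
      Fin.snoc (α := fun _ ↦ MvPolynomial (Fin (n + 1)) R) (fun i ↦ X i.succ) 0 k + X k * X 0 := by
  set H := hornerX0 R n (Fin.last n) * X 0
  have hH : Transcendental (MvPolynomial (Fin n) R) (finSuccEquiv R n H) := by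
    have hmonic := monic_finSuccEquiv_hornerX0 (R := R) (Fin.last n)
    rw [map_mul, finSuccEquiv_X_zero]
    refine Polynomial.transcendental _ ?_ ?_
    · rw [Polynomial.natDegree_mul_X hmonic.ne_zero]
      exact Nat.succ_ne_zero _
    · rw [(hmonic.mul Polynomial.monic_X).leadingCoeff]
      exact one_mem _
  refine AlgebraicIndependent.of_comp (aeval fun k ↦ -hornerX0 R n k) ?_
  have hsubst : (aeval fun k ↦ -hornerX0 R n k) ∘ (fun k : Fin (n + 1) ↦
      Fin.snoc (α := fun _ ↦ MvPolynomial (Fin (n + 1)) R) (fun i ↦ X i.succ) 0 k + X k * X 0) =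
      Fin.cons H (fun i : Fin n ↦ X i.succ) ∘ finRotate (n + 1) := by
    funext k
    cases k using Fin.lastCases with
    | last => simp [H]
    | cast i => simp [Fin.coeSucc_eq_succ]
  rw [hsubst]
  exact (algebraicIndependent_cons_X_succ hH).comp _ (finRotate _).injective

theorem esymm_eq_zero_of_card_lt {σ : Type*} [Fintype σ] (R : Type*) [CommSemiring R] {k : ℕ}
    (hk : Fintype.card σ < k) : esymm σ R k = 0 := by
  rw [esymm, Finset.powersetCard_eq_empty.mpr (by simpa using hk), Finset.sum_empty]

theorem algebraicIndependent_esymm (R : Type*) [CommRing R] (N : ℕ) :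
    AlgebraicIndependent R fun i : Fin N ↦ esymm (Fin N) R (i + 1) := by
  rw [algebraicIndependent_iff_injective_aeval]
  intro p q hpq
  apply esymmAlgHom_fin_injective R le_rfl
  rw [Subtype.ext_iff, esymmAlgHom_apply, esymmAlgHom_apply]
  exact hpq

end MvPolynomial

theorem AlgebraicIndependent.next_add_mul_first {R A : Type*} [CommRing R] [Nontrivial R]
    [CommRing A] [Algebra R A] {N : ℕ} {e : ℕ → A}
    (he : AlgebraicIndependent R fun i : Fin N ↦ e (i + 1)) (hN : e (N + 1) = 0) :
    AlgebraicIndependent R fun k : Fin N ↦ e (k + 2) + e (k + 1) * e 1 := by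
  cases N with
  | zero => exact algebraicIndependent_empty_type_iff.mpr he.algebraMap_injective
  | succ n =>
    have hφ : (aeval fun i : Fin (n + 1) ↦ e (i + 1)) ∘ (fun k : Fin (n + 1) ↦
        Fin.snoc (α := fun _ ↦ MvPolynomial (Fin (n + 1)) R) (fun i ↦ X i.succ) 0 k + X k * X 0) =
        fun k : Fin (n + 1) ↦ e (k + 2) + e (k + 1) * e 1 := by
      funext k
      cases k using Fin.lastCases with
      | last => simp [hN]
      | cast i => simp
    rw [← hφ]
    exact algebraicIndependent_snoc_X_succ_add_X_mul_X_zero.map'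
      (algebraicIndependent_iff_injective_aeval.mp he)

theorem stmt7_general (m : ℕ) :
    AlgebraicIndependent (ZMod 2)
      (fun k : Fin (m - 1) =>
        esymm (Fin (m - 1)) (ZMod 2) ((k : ℕ) + 2) +
          esymm (Fin (m - 1)) (ZMod 2) ((k : ℕ) + 1) *
            esymm (Fin (m - 1)) (ZMod 2) 1) :=
  (algebraicIndependent_esymm _ _).next_add_mul_first (esymm_eq_zero_of_card_lt _ (by simp))

/-- In `(ZMod 2)[Y₀,…,Y_{m−2}]` (with `m ≥ 2`), the `m − 1` polynomials
`p_k = e_k + e_{k−1}·e₁` for `k = 2, …, m` are algebraically independent over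
`ZMod 2`, where `eⱼ` is the `j`-th elementary symmetric polynomial in the
`m − 1` variables (so `e₀ = 1` and `e_m = 0`). -/
theorem stmt7 (m : ℕ) (hm : 2 ≤ m) :
    AlgebraicIndependent (ZMod 2)
      (fun k : Fin (m - 1) =>
        esymm (Fin (m - 1)) (ZMod 2) ((k : ℕ) + 2) +
          esymm (Fin (m - 1)) (ZMod 2) ((k : ℕ) + 1) *
            esymm (Fin (m - 1)) (ZMod 2) 1) :=
  stmt7_general m
end

section
/- Let α and β be finite types with 4 ∣ card α and 4 ∣ card β. Let g₁ be an even permutation of α and g₂ an even permutation of β, let a ≠ b be elements of α and c ≠ d be elements of β, and let p be the permutation of α ⊕ β given by the block sum Equiv.sumCongr (g₁ · swap a b) (g₂ · swap c d). Then p is not a fixed-point-free involution: it is not the case that both p² = 1 and p(x) ≠ x for all x ∈ α ⊕ β. -/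
/-- An odd permutation of a finite type of cardinality divisible by 4 cannot be a
fixed-point-free involution. -/
lemma aux_sign_fpf (α : Type*) [Fintype α] [DecidableEq α]
    (hα : 4 ∣ Fintype.card α) (h : Equiv.Perm α)
    (hsgn : Equiv.Perm.sign h = -1) (hsq : h ^ 2 = 1) (hfpf : ∀ x, h x ≠ x) : False := by
  -- h ≠ 1
  have hne : h ≠ 1 := by
    intro h1
    obtain ⟨x⟩ : Nonempty α := by
      rcases hα with ⟨m, hm⟩
      by_contra he
      rw [not_nonempty_iff] at he
      have := Fintype.card_eq_zero (α := α)
      simp_all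
    exact hfpf x (by simp [h1])
  have hord : orderOf h = 2 := by
    have := orderOf_eq_prime (hp := Nat.fact_prime_two) hsq hne
    exact this
  -- every cycle length is 2
  have hcyc : ∀ n ∈ h.cycleType, n = 2 := by
    intro n hn
    have h2 : 2 ≤ n := Equiv.Perm.two_le_of_mem_cycleType hn
    have hd : n ∣ 2 := by
      rw [← hord, ← Equiv.Perm.lcm_cycleType]
      exact Multiset.dvd_lcm hn
    exact Nat.le_antisymm (Nat.le_of_dvd two_pos hd) h2
  have hsum : h.cycleType.sum = Fintype.card α := by
    rw [Equiv.Perm.sum_cycleType]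
    have : h.support = Finset.univ := by
      rw [Finset.eq_univ_iff_forall]
      intro x
      simp [Equiv.Perm.mem_support, hfpf x]
    rw [this, Finset.card_univ]
  have hsum2 : h.cycleType.sum = 2 * Multiset.card h.cycleType := by
    have hrep : h.cycleType = Multiset.replicate (Multiset.card h.cycleType) 2 :=
      Multiset.eq_replicate_card.mpr hcyc
    rw [hrep]
    simp [Multiset.sum_replicate, mul_comm]
  obtain ⟨m, hm⟩ := hα
  have hcard : Multiset.card h.cycleType = 2 * m := by omega
  have hs := Equiv.Perm.sign_of_cycleType h
  rw [hsgn, hsum, hm, hcard] at hs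
  have hone : ((-1 : ℤˣ)) ^ (4 * m + 2 * m) = 1 := by
    rw [show 4 * m + 2 * m = 2 * (3 * m) by ring, pow_mul]
    simp
  rw [hone] at hs
  exact absurd hs (by decide)

/-- Let `4 ∣ card α`, `4 ∣ card β`, let `g₁`, `g₂` be even permutations of `α`
and `β`, and let `a ≠ b` in `α`, `c ≠ d` in `β`.  Then the block sum
`sumCongr (g₁ * swap a b) (g₂ * swap c d)` is not a fixed-point-free
involution of `α ⊕ β`. -/
theorem stmt11 (α β : Type*) [Fintype α] [Fintype β] [DecidableEq α] [DecidableEq β]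
    (hα : 4 ∣ Fintype.card α) (hβ : 4 ∣ Fintype.card β)
    (g₁ : Equiv.Perm α) (hg₁ : g₁ ∈ alternatingGroup α)
    (g₂ : Equiv.Perm β) (hg₂ : g₂ ∈ alternatingGroup β)
    (a b : α) (hab : a ≠ b) (c d : β) (hcd : c ≠ d) :
    ¬ ((Equiv.sumCongr (g₁ * Equiv.swap a b) (g₂ * Equiv.swap c d) :
          Equiv.Perm (α ⊕ β)) ^ 2 = 1 ∧
        ∀ x : α ⊕ β,
          Equiv.sumCongr (g₁ * Equiv.swap a b) (g₂ * Equiv.swap c d) x ≠ x) := by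
  rintro ⟨hsq, hfpf⟩
  set h := g₁ * Equiv.swap a b with hh
  apply aux_sign_fpf α hα h
  · rw [hh, map_mul, Equiv.Perm.mem_alternatingGroup.mp hg₁, Equiv.Perm.sign_swap hab, one_mul]
  · ext x
    have := congrArg (fun q : Equiv.Perm (α ⊕ β) => q (Sum.inl x)) hsq
    simpa [pow_two, Equiv.sumCongr_apply] using this
  · intro x
    have := hfpf (Sum.inl x)
    simpa [Equiv.sumCongr_apply] using this
end

section
/- Let n ≥ 3 and let V = Fin n → ZMod 2. Let T ≤ Perm(V) be the subgroup of all translations x ↦ v + x for v ∈ V (the image of the regular representation of V). Then the normalizer of T in Perm(V) is contained in alternatingGroup(V). -/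
/-!
A permutation normalizing the translations of `V = 𝔽₂ⁿ` is affine, `x ↦ v + f x` with `f`
additive, hence `𝔽₂`-linear. An involution moving `4k` points is a product of `2k` transpositions,
so it is even. A nonzero translation is an involution moving all `2ⁿ` points. Over `𝔽₂` the only
invertible diagonal matrix is `1`, so a linear automorphism is a product of transvections
`x ↦ x + x j • eᵢ`, and these are involutions moving the `2ⁿ⁻¹` points with `x j = 1`. For `n ≥ 3`
both counts are divisible by `4`.
-/

open Equiv Equiv.Perm Matrix Finset

namespace Equiv.Perm

theorem sign_eq_one_of_sq_eq_one {α : Type*} [Fintype α] [DecidableEq α] {σ : Perm α}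
    (hσ : σ ^ 2 = 1) (h4 : 4 ∣ #σ.support) : sign σ = 1 := by
  obtain ⟨k, hk⟩ := h4
  rw [sign_of_pow_two_eq_one hσ, card_fixedPoints, sum_cycleType,
    Nat.sub_sub_self (card_le_univ _), hk, show 4 * k / 2 = 2 * k by omega, pow_mul]
  simp

theorem sign_addLeft_of_add_self_eq_zero {G : Type*} [AddGroup G] [Fintype G] [DecidableEq G]
    {w : G} (hw : w + w = 0) (h4 : 4 ∣ Fintype.card G) : sign (Equiv.addLeft w) = 1 := by
  rcases eq_or_ne w 0 with rfl | hw0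
  · simp
  refine sign_eq_one_of_sq_eq_one ?_ ?_
  · ext x
    simp [sq, ← add_assoc, hw]
  · convert h4
    rw [← card_univ]
    congr
    ext x
    simp [hw0]

theorem exists_eq_addLeft_mul_addEquiv {G : Type*} [AddGroup G] {σ : Perm G}
    (h : ∀ w, ∃ u, σ * Equiv.addLeft w * σ⁻¹ = Equiv.addLeft u) :
    ∃ (v : G) (f : G ≃+ G), σ = Equiv.addLeft v * f.toEquiv := by
  set τ : Perm G := Equiv.addLeft (-σ 0) * σ
  have hτ : ∀ w x, τ (w + x) = τ w + τ x := fun w x => by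
    obtain ⟨u, hu⟩ := h w
    have key : ∀ x, σ (w + x) = u + σ x := fun x => by
      simpa using congr($hu (σ x))
    have hu : u = σ w + -σ 0 := eq_add_neg_of_add_eq (by simpa using (key 0).symm)
    simp [τ, key, hu, add_assoc]
  exact ⟨σ 0, AddEquiv.mk' τ hτ, by ext x; exact (add_neg_cancel_left (σ 0) (σ x)).symm⟩

end Equiv.Perm

theorem Matrix.transvection_mulVec {ι R : Type*} [Fintype ι] [DecidableEq ι] [CommRing R]
    (i j : ι) (c : R) (x : ι → R) : transvection i j c *ᵥ x = x + Pi.single i (c * x j) := by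
  rw [transvection, add_mulVec, one_mulVec, single_mulVec]
  rfl

section LinearAutomorphisms

variable {ι : Type*} [Fintype ι] [DecidableEq ι]

theorem Fintype.card_filter_apply_eq {β : Type*} [Fintype β] [DecidableEq β] (j : ι) (b : β) :
    #{x : ι → β | x j = b} = Fintype.card β ^ (Fintype.card ι - 1) := by
  simpa [Fintype.piFinset_univ] using
    Fintype.card_filter_piFinset_const_eq_of_mem (univ : Finset β) j (mem_univ b)

theorem sign_eq_one_of_coe_eq_transvection_mulVec (hι : 3 ≤ Fintype.card ι) {i j : ι}
    (hij : i ≠ j) {e : Perm (ι → ZMod 2)} (he : ⇑e = (transvection i j 1 *ᵥ ·)) : sign e = 1 := by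
  have he' : ∀ x, e x = x + Pi.single i (x j) := fun x => by
    simp only [he, transvection_mulVec, one_mul]
  refine sign_eq_one_of_sq_eq_one ?_ ?_
  · ext x k
    simp only [sq, Perm.mul_apply, he', Pi.add_apply, Pi.single_apply, if_neg hij.symm, add_zero]
    split_ifs <;> simp [add_assoc, CharTwo.add_self_eq_zero]
  · have hsupport : e.support = ({x | x j = 1} : Finset (ι → ZMod 2)) := by
      ext x
      have : ∀ a : ZMod 2, a ≠ 0 ↔ a = 1 := by decide
      simp [he', Pi.single_eq_zero_iff, this]
    rw [hsupport, Fintype.card_filter_apply_eq, ZMod.card]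
    exact pow_dvd_pow 2 (show 2 ≤ Fintype.card ι - 1 by omega)

theorem sign_eq_one_of_coe_eq_mulVec (hι : 3 ≤ Fintype.card ι) {M : Matrix ι ι (ZMod 2)}
    (hM : M.det ≠ 0) {e : Perm (ι → ZMod 2)} (he : ⇑e = (M *ᵥ ·)) : sign e = 1 := by
  refine diagonal_transvection_induction_of_det_ne_zero
    (fun M => ∀ e : Perm (ι → ZMod 2), ⇑e = (M *ᵥ ·) → sign e = 1) M hM ?diag ?transvec ?mul e he
  case diag =>
    intro D hD e he
    have hD1 : D = 1 := funext fun i => by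
      have : ∀ a : ZMod 2, a ≠ 0 → a = 1 := by decide
      exact this _ fun h => hD (by simp [det_diagonal, prod_eq_zero (mem_univ i) h])
    have : e = 1 := by ext1 x; simp [he, hD1]
    simp [this]
  case transvec =>
    intro ⟨i, j, hij, c⟩ e he
    have : ∀ a : ZMod 2, a = 0 ∨ a = 1 := by decide
    obtain rfl | rfl := this c
    · have : e = 1 := by ext1 x; simp [he, TransvectionStruct.toMatrix]
      simp [this]
    · exact sign_eq_one_of_coe_eq_transvection_mulVec hι hij he
  case mul =>
    intro A B _ hB hA hB' e he
    let eB := (B.toLinearEquiv' (B.invertibleOfIsUnitDet hB.isUnit)).toEquiv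
    have heB : ⇑eB = (B *ᵥ ·) := rfl
    have heA : ⇑(e * eB⁻¹) = (A *ᵥ ·) := by
      ext1 x
      have : B *ᵥ eB⁻¹ x = x := eB.apply_symm_apply x
      simp only [Perm.mul_apply, he, ← mulVec_mulVec, this]
    rw [show e = e * eB⁻¹ * eB by group, map_mul, hA _ heA, hB' _ heB, one_mul]

theorem LinearEquiv.sign_toEquiv_eq_one (hι : 3 ≤ Fintype.card ι)
    (ℓ : (ι → ZMod 2) ≃ₗ[ZMod 2] (ι → ZMod 2)) : sign ℓ.toEquiv = 1 :=
  sign_eq_one_of_coe_eq_mulVec hι (M := ℓ.toLinearMap.toMatrix')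
    (by rw [LinearMap.det_toMatrix']; exact ℓ.isUnit_det'.ne_zero)
    (by ext1 x; simp)

end LinearAutomorphisms

/-- For `n ≥ 3` and `V = Fin n → ZMod 2`, the normalizer in `Perm V` of the
subgroup `T` of all translations `x ↦ v + x` (the regular representation of
`V`) is contained in the alternating group: every affine permutation of
`(F₂)ⁿ` is even. -/
theorem stmt12 (n : ℕ) (hn : 3 ≤ n)
    (T : Subgroup (Equiv.Perm (Fin n → ZMod 2)))
    (hT : ∀ σ : Equiv.Perm (Fin n → ZMod 2),
      σ ∈ T ↔ ∃ v : Fin n → ZMod 2, σ = Equiv.addLeft v) :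
    Subgroup.normalizer (T : Set (Equiv.Perm (Fin n → ZMod 2))) ≤ alternatingGroup (Fin n → ZMod 2) := by
  intro σ hσ
  obtain ⟨v, f, rfl⟩ := exists_eq_addLeft_mul_addEquiv fun w =>
    (hT _).1 ((Subgroup.mem_normalizer_iff.1 hσ _).1 ((hT _).2 ⟨w, rfl⟩))
  have hv : v + v = 0 := funext fun i => CharTwo.add_self_eq_zero (v i)
  have hcard : 4 ∣ Fintype.card (Fin n → ZMod 2) := by
    rw [Fintype.card_fun, ZMod.card, Fintype.card_fin]
    exact pow_dvd_pow 2 (show 2 ≤ n by omega)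
  rw [mem_alternatingGroup, map_mul, sign_addLeft_of_add_self_eq_zero hv hcard, one_mul]
  exact LinearEquiv.sign_toEquiv_eq_one (by simpa using hn) (f.toLinearEquiv (ZMod.map_smul f))
end

section
/- For all natural numbers p ≥ 1 and q ≥ 1: if p is even then Sh₊(p,q) = Sh₊(p−1,q) + Sh₊(p,q−1) and Sh₋(p,q) = Sh₋(p−1,q) + Sh₋(p,q−1); if p is odd then Sh₊(p,q) = Sh₊(p−1,q) + Sh₋(p,q−1) and Sh₋(p,q) = Sh₋(p−1,q) + Sh₊(p,q−1). That is, |Sh_±(p,q)| = |Sh_±(p−1,q)| + |Sh_{±(−1)^p}(p,q−1)|. -/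
/-- A `(p,q)`-shuffle: a permutation of `Fin (p+q)` strictly increasing on the
first `p` positions and on the last `q` positions. -/
def IsShuffle (p q : ℕ) (σ : Equiv.Perm (Fin (p + q))) : Prop :=
  (∀ i j : Fin (p + q), i < j → (j : ℕ) < p → σ i < σ j) ∧
  (∀ i j : Fin (p + q), i < j → p ≤ (i : ℕ) → σ i < σ j)

/-- `Sh₊(p,q)`: the number of `(p,q)`-shuffles of sign `+1`. -/
noncomputable def ShPos (p q : ℕ) : ℕ :=
  Nat.card {σ : Equiv.Perm (Fin (p + q)) // IsShuffle p q σ ∧ Equiv.Perm.sign σ = 1}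

/-- `Sh₋(p,q)`: the number of `(p,q)`-shuffles of sign `−1`. -/
noncomputable def ShNeg (p q : ℕ) : ℕ :=
  Nat.card {σ : Equiv.Perm (Fin (p + q)) // IsShuffle p q σ ∧ Equiv.Perm.sign σ = -1}

/-!
A `(p,q)`-shuffle is increasing on each of its two blocks, so the position sent to `0` is the
first position of a block: `0` or `p`. Deleting that position (and lowering all other values by
one) is a bijection onto the `(p-1,q)`-shuffles in the first case and onto the `(p,q-1)`-shuffles
in the second. A permutation with `σ k = 0` is the cycle `(0 1 … k)` followed by a permutation
fixing `0`, so the deletion changes the sign by `(-1)^k`: not at all for `k = 0`, by `(-1)^p`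
for `k = p`.
-/

theorem Nat.card_subtype_eq_add_of_imp_or {α : Type*} [Finite α] {P A B : α → Prop}
    (hP : ∀ x, P x → A x ∨ B x) (hAB : ∀ x, A x → ¬ B x) :
    Nat.card {x // P x} = Nat.card {x // P x ∧ A x} + Nat.card {x // P x ∧ B x} := by
  classical
  rw [← Nat.card_sum, ← Nat.card_congr (subtypeOrEquiv _ _ ?_)]
  · exact Nat.card_congr (Equiv.subtypeEquivRight fun x =>
      ⟨fun h => (hP x h).imp (⟨h, ·⟩) (⟨h, ·⟩), fun h => h.elim And.left And.left⟩)
  · exact Pi.disjoint_iff.2 fun x => Prop.disjoint_iff.2 fun ⟨⟨_, ha⟩, _, hb⟩ => hAB x ha hb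

theorem Fin.val_succAbove_lt_iff {n : ℕ} (k : Fin (n + 1)) (i : Fin n) :
    (k.succAbove i : ℕ) < k ↔ (i : ℕ) < k :=
  Fin.succAbove_lt_iff_castSucc_lt k i

namespace Shuffle

open Equiv Equiv.Perm

/-- `IsShuffle p q` with the size of the ambient `Fin n` decoupled from `p + q`. -/
def IsShuffleAt (p : ℕ) {n : ℕ} (σ : Perm (Fin n)) : Prop :=
  StrictMonoOn σ {i | (i : ℕ) < p} ∧ StrictMonoOn σ {i | p ≤ (i : ℕ)}

noncomputable def shuffleCount (p n : ℕ) (s : ℤˣ) : ℕ :=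
  Nat.card {σ : Perm (Fin n) // IsShuffleAt p σ ∧ sign σ = s}

variable {n : ℕ}

/-- The permutation sending `k` to `0` and `k.succAbove i` to `(τ i).succ`. -/
noncomputable def insertZero (k : Fin (n + 1)) (τ : Perm (Fin n)) : Perm (Fin (n + 1)) :=
  decomposeFin.symm (0, τ) * k.cycleRange

@[simp]
theorem insertZero_apply_self (k : Fin (n + 1)) (τ : Perm (Fin n)) : insertZero k τ k = 0 := by
  simp [insertZero, decomposeFin_symm_apply_zero]

@[simp]
theorem insertZero_apply_succAbove (k : Fin (n + 1)) (τ : Perm (Fin n)) (i : Fin n) :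
    insertZero k τ (k.succAbove i) = (τ i).succ := by
  simp [insertZero, decomposeFin_symm_apply_succ]

theorem sign_insertZero (k : Fin (n + 1)) (τ : Perm (Fin n)) :
    sign (insertZero k τ) = (-1) ^ (k : ℕ) * sign τ := by
  rw [insertZero, map_mul, decomposeFin.symm_sign, Fin.sign_cycleRange, if_pos rfl, one_mul,
    mul_comm]

theorem sign_insertZero_eq_iff (k : Fin (n + 1)) (τ : Perm (Fin n)) (s : ℤˣ) :
    sign (insertZero k τ) = s ↔ sign τ = (-1) ^ (k : ℕ) * s := by
  rw [sign_insertZero]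
  constructor
  · rintro rfl
    simp [← mul_assoc, Int.units_mul_self]
  · intro h
    simp [h, ← mul_assoc, Int.units_mul_self]

theorem insertZero_injective (k : Fin (n + 1)) : Function.Injective (insertZero (n := n) k) :=
  fun τ τ' h => Equiv.ext fun i => Fin.succ_injective _ <| by
    simpa using congrArg (· (k.succAbove i)) h

theorem exists_insertZero_eq {k : Fin (n + 1)} {σ : Perm (Fin (n + 1))} (hσ : σ k = 0) :
    ∃ τ, insertZero k τ = σ := by
  set ρ := σ * k.cycleRange⁻¹
  have hρ : (decomposeFin ρ).1 = 0 := by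
    simpa [ρ, hσ] using (decomposeFin_symm_apply_zero (decomposeFin ρ).1 (decomposeFin ρ).2).symm
  refine ⟨(decomposeFin ρ).2, ?_⟩
  rw [insertZero, ← hρ, Prod.mk.eta, Equiv.symm_apply_apply, inv_mul_cancel_right]

theorem card_and_apply_eq_zero (k : Fin (n + 1)) (P : Perm (Fin (n + 1)) → Prop) :
    Nat.card {σ // P σ ∧ σ k = 0} = Nat.card {τ : Perm (Fin n) // P (insertZero k τ)} := by
  refine (Nat.card_congr (Equiv.ofBijective
    (fun τ => ⟨insertZero k τ.1, τ.2, insertZero_apply_self k τ.1⟩) ⟨?_, ?_⟩)).symm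
  · exact fun τ τ' h => Subtype.ext (insertZero_injective k (congrArg Subtype.val h))
  · rintro ⟨σ, hP, hσ⟩
    obtain ⟨τ, rfl⟩ := exists_insertZero_eq hσ
    exact ⟨⟨τ, hP⟩, rfl⟩

theorem strictMonoOn_insertZero_iff {k : Fin (n + 1)} {τ : Perm (Fin n)} {S : Set (Fin (n + 1))}
    (hS : k ∈ S → ∀ s ∈ S, k ≤ s) :
    StrictMonoOn (insertZero k τ) S ↔ StrictMonoOn τ (k.succAbove ⁻¹' S) := by
  constructor
  · intro h a ha b hb hab
    simpa using h ha hb (Fin.strictMono_succAbove k hab)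
  · intro h a ha b hb hab
    rcases eq_or_ne b k with rfl | hbk
    · exact absurd (hS hb a ha) hab.not_ge
    obtain ⟨b, rfl⟩ := Fin.exists_succAbove_eq hbk
    rcases eq_or_ne a k with rfl | hak
    · simp
    obtain ⟨a, rfl⟩ := Fin.exists_succAbove_eq hak
    simpa using h ha hb (Fin.succAbove_lt_succAbove_iff.mp hab)

theorem isShuffleAt_insertZero_zero_iff {p : ℕ} {τ : Perm (Fin n)} :
    IsShuffleAt (p + 1) (insertZero 0 τ) ↔ IsShuffleAt p τ := by
  unfold IsShuffleAt
  rw [strictMonoOn_insertZero_iff (fun _ s _ => Fin.zero_le s),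
    strictMonoOn_insertZero_iff (fun h => absurd h (by simp))]
  simp [Set.preimage]

theorem isShuffleAt_insertZero_iff {p : ℕ} (hp : p < n + 1) {τ : Perm (Fin n)} :
    IsShuffleAt p (insertZero ⟨p, hp⟩ τ) ↔ IsShuffleAt p τ := by
  unfold IsShuffleAt
  rw [strictMonoOn_insertZero_iff (fun h => absurd h (lt_irrefl p)),
    strictMonoOn_insertZero_iff (S := {i | p ≤ (i : ℕ)}) (fun _ _ hs => hs)]
  simp only [Set.preimage_ofPred_eq, ← not_lt, Fin.val_succAbove_lt_iff ⟨p, hp⟩]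

theorem IsShuffleAt.apply_zero_eq_zero_or {p : ℕ} {σ : Perm (Fin (n + 1))}
    (hσ : IsShuffleAt p σ) (hp : p < n + 1) : σ 0 = 0 ∨ σ ⟨p, hp⟩ = 0 := by
  have not_lt_of_mem : ∀ {S : Set (Fin (n + 1))}, StrictMonoOn σ S → ∀ i ∈ S, σ.symm 0 ∈ S →
      ¬ i < σ.symm 0 :=
    fun h i hi hj hij => Fin.not_lt_zero (σ i) (by simpa using h hi hj hij)
  by_contra! hne
  set j := σ.symm 0
  have hσj : σ j = 0 := σ.apply_symm_apply 0
  have hj0 : (j : ℕ) ≠ 0 := fun h => hne.1 (by rwa [show j = 0 from Fin.ext h] at hσj)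
  have hjp : (j : ℕ) ≠ p := fun h => hne.2 (by rwa [show j = ⟨p, hp⟩ from Fin.ext h] at hσj)
  let i : Fin (n + 1) := ⟨j - 1, by omega⟩
  have hij : i < j := by simp only [Fin.lt_def, i]; omega
  rcases lt_or_gt_of_ne hjp with h | h
  · exact not_lt_of_mem hσ.1 i (by simp only [Set.mem_ofPred_eq, i]; omega) h hij
  · exact not_lt_of_mem hσ.2 i (by simp only [Set.mem_ofPred_eq, i]; omega) h.le hij

theorem shuffleCount_succ_succ {p n : ℕ} (hpn : p < n) (s : ℤˣ) :
    shuffleCount (p + 1) (n + 1) s =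
      shuffleCount p n s + shuffleCount (p + 1) n ((-1) ^ (p + 1) * s) := by
  have hne : (0 : Fin (n + 1)) ≠ ⟨p + 1, by omega⟩ := by simp [Fin.ext_iff]
  rw [shuffleCount, Nat.card_subtype_eq_add_of_imp_or
    (A := (· 0 = 0)) (B := (· ⟨p + 1, by omega⟩ = 0))
    (fun σ hσ => hσ.1.apply_zero_eq_zero_or _)
    (fun σ h0 h1 => hne (σ.injective (h0.trans h1.symm))),
    card_and_apply_eq_zero, card_and_apply_eq_zero]
  simp only [isShuffleAt_insertZero_zero_iff, isShuffleAt_insertZero_iff, sign_insertZero_eq_iff]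
  simp [shuffleCount]

end Shuffle

theorem isShuffle_iff_isShuffleAt {p q : ℕ} {σ : Equiv.Perm (Fin (p + q))} :
    IsShuffle p q σ ↔ Shuffle.IsShuffleAt p σ :=
  and_congr ⟨fun h i _ j hj hij => h i j hij hj, fun h _ _ hij hj => h (Nat.lt_trans hij hj) hj hij⟩
    ⟨fun h i hi j _ hij => h i j hij hi, fun h _ _ hij hi => h hi (Nat.le_trans hi hij.le) hij⟩

theorem shPos_eq_shuffleCount (p q : ℕ) : ShPos p q = Shuffle.shuffleCount p (p + q) 1 := by
  simp only [ShPos, Shuffle.shuffleCount, isShuffle_iff_isShuffleAt]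

theorem shNeg_eq_shuffleCount (p q : ℕ) : ShNeg p q = Shuffle.shuffleCount p (p + q) (-1) := by
  simp only [ShNeg, Shuffle.shuffleCount, isShuffle_iff_isShuffleAt]

/-- Pascal-type recurrence for signed shuffle counts:
`|Sh_±(p,q)| = |Sh_±(p−1,q)| + |Sh_{±(−1)^p}(p,q−1)|`. -/
theorem stmt13 (p q : ℕ) (hp : 1 ≤ p) (hq : 1 ≤ q) :
    (Even p →
      ShPos p q = ShPos (p - 1) q + ShPos p (q - 1) ∧
      ShNeg p q = ShNeg (p - 1) q + ShNeg p (q - 1)) ∧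
    (Odd p →
      ShPos p q = ShPos (p - 1) q + ShNeg p (q - 1) ∧
      ShNeg p q = ShNeg (p - 1) q + ShPos p (q - 1)) := by
  obtain ⟨p, rfl⟩ := Nat.exists_eq_add_of_le' hp
  obtain ⟨q, rfl⟩ := Nat.exists_eq_add_of_le' hq
  have hrec (s : ℤˣ) : Shuffle.shuffleCount (p + 1) (p + 1 + (q + 1)) s =
      Shuffle.shuffleCount p (p + (q + 1)) s +
        Shuffle.shuffleCount (p + 1) (p + 1 + q) ((-1) ^ (p + 1) * s) := by
    rw [show p + (q + 1) = p + 1 + q by omega]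
    exact Shuffle.shuffleCount_succ_succ (n := p + 1 + q) (by omega) s
  simp only [shPos_eq_shuffleCount, shNeg_eq_shuffleCount, Nat.add_sub_cancel, hrec]
  refine ⟨fun h => ?_, fun h => ?_⟩ <;> simp [h.neg_one_pow]
end

section
/- For every natural number m ≥ 2, both Sh₊(m,m) and Sh₋(m,m) are even numbers. -/
/-!
Right multiplication by the block swap, which exchanges the two halves of `Fin (m + m)`, is a
fixed-point-free involution on `(m,m)`-shuffles that multiplies the sign by `(-1) ^ m`. For even
`m` it pairs up the shuffles of each sign. For odd `m` it exchanges the two signs, so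
`Sh₊(m,m) = Sh₋(m,m)`; as a shuffle is determined by the image of its first block,
`Sh₊(m,m) + Sh₋(m,m) = C(2m, m)`, which is divisible by `4` for odd `m > 1`.
-/

open Equiv Equiv.Perm Finset Function

theorem Function.Involutive.even_card_of_forall_ne {α : Type*} [Finite α] {f : α → α}
    (hf : Involutive f) (hne : ∀ x, f x ≠ x) : Even (Nat.card α) := by
  classical
  have := Fintype.ofFinite α
  have hsq : hf.toPerm f ^ 2 ^ 1 = 1 := by ext x; simp [sq, hf x]
  have hmod := card_compl_support_modEq (p := 2) (n := 1) hsq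
  have hsupp : (hf.toPerm f).supportᶜ = ∅ := by ext x; simp [hne x]
  rw [hsupp, card_empty] at hmod
  rw [Nat.card_eq_fintype_card, Nat.even_iff]
  exact hmod.symm

lemma coe_finRotate_pow {n : ℕ} (k : ℕ) (i : Fin n) :
    ((finRotate n ^ k) i : ℕ) = (i + k) % n := by
  cases n with
  | zero => exact i.elim0
  | succ n =>
    induction k with
    | zero => simp [Nat.mod_eq_of_lt i.isLt]
    | succ k ih =>
      rw [pow_succ', Perm.mul_apply, finRotate_apply, Fin.val_add, ih, Fin.val_one',
        Nat.add_mod_mod, Nat.mod_add_mod, add_assoc]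

def blockSwap (m : ℕ) : Perm (Fin (m + m)) := finAddFlip

lemma blockSwap_apply_castAdd {m : ℕ} (i : Fin m) :
    blockSwap m (Fin.castAdd m i) = Fin.natAdd m i :=
  finAddFlip_apply_castAdd i m

lemma blockSwap_apply_natAdd {m : ℕ} (i : Fin m) :
    blockSwap m (Fin.natAdd m i) = Fin.castAdd m i :=
  finAddFlip_apply_natAdd i m

lemma blockSwap_eq_finRotate_pow (m : ℕ) : blockSwap m = finRotate (m + m) ^ m := by
  ext i
  rw [coe_finRotate_pow]
  induction i using Fin.addCases with
  | left i =>
    rw [blockSwap_apply_castAdd, Fin.val_natAdd, Fin.val_castAdd, Nat.mod_eq_of_lt (by omega),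
      add_comm]
  | right i =>
    rw [blockSwap_apply_natAdd, Fin.val_castAdd, Fin.val_natAdd, add_right_comm,
      Nat.add_mod_left, Nat.mod_eq_of_lt (by omega)]

lemma sign_blockSwap (m : ℕ) : sign (blockSwap m) = (-1) ^ m := by
  rw [blockSwap_eq_finRotate_pow, map_pow, sign_finRotate]
  rcases m.eq_zero_or_pos with rfl | hm
  · simp
  · rw [(show Odd (m + m - 1) from ⟨m - 1, by omega⟩).neg_one_pow]

lemma blockSwap_mul_self (m : ℕ) : blockSwap m * blockSwap m = 1 := by
  ext i
  induction i using Fin.addCases with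
  | left i => rw [Perm.mul_apply, blockSwap_apply_castAdd, blockSwap_apply_natAdd]; rfl
  | right i => rw [Perm.mul_apply, blockSwap_apply_natAdd, blockSwap_apply_castAdd]; rfl

lemma blockSwap_ne_one {m : ℕ} (hm : 0 < m) : blockSwap m ≠ 1 := by
  intro h
  have := congrArg Fin.val (Perm.ext_iff.mp h (Fin.castAdd m ⟨0, hm⟩))
  rw [blockSwap_apply_castAdd, Perm.one_apply, Fin.val_natAdd, Fin.val_castAdd] at this
  omega

section Shuffle

variable {p q : ℕ} {σ τ : Perm (Fin (p + q))}

theorem isShuffle_iff :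
    IsShuffle p q σ ↔ StrictMono (σ ∘ Fin.castAdd q) ∧ StrictMono (σ ∘ Fin.natAdd p) := by
  refine ⟨fun h => ⟨fun i j hij => ?_, fun i j hij => ?_⟩, fun h => ⟨fun i j hij hj => ?_,
    fun i j hij hi => ?_⟩⟩
  · exact h.1 _ _ (Fin.strictMono_castAdd q hij) j.isLt
  · exact h.2 _ _ (Fin.strictMono_natAdd p hij) (Nat.le_add_right p i)
  · have hi : (i : ℕ) < p := (Fin.lt_def.mp hij).trans hj
    exact h.1 (show (⟨i, hi⟩ : Fin p) < ⟨j, hj⟩ from hij)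
  · have hij' := Fin.lt_def.mp hij
    obtain ⟨i', rfl⟩ : ∃ i' : Fin q, Fin.natAdd p i' = i :=
      ⟨⟨i - p, by omega⟩, Fin.ext (by rw [Fin.val_natAdd, Fin.val_mk]; omega)⟩
    obtain ⟨j', rfl⟩ : ∃ j' : Fin q, Fin.natAdd p j' = j :=
      ⟨⟨j - p, by omega⟩, Fin.ext (by rw [Fin.val_natAdd, Fin.val_mk]; omega)⟩
    exact h.2 ((Fin.strictMono_natAdd p).lt_iff_lt.mp hij)

def leftImage (σ : Perm (Fin (p + q))) : Finset (Fin (p + q)) :=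
  univ.image (σ ∘ Fin.castAdd q)

lemma card_leftImage (σ : Perm (Fin (p + q))) : (leftImage σ).card = p := by
  rw [leftImage, card_image_of_injective _ (σ.injective.comp (Fin.castAdd_injective p q)),
    card_univ, Fintype.card_fin]

lemma card_compl_leftImage (σ : Perm (Fin (p + q))) : (leftImage σ)ᶜ.card = q := by
  rw [card_compl, card_leftImage, Fintype.card_fin, Nat.add_sub_cancel_left]

lemma apply_castAdd_mem_leftImage (i : Fin p) : σ (Fin.castAdd q i) ∈ leftImage σ :=
  mem_image_of_mem _ (mem_univ i)

lemma apply_natAdd_mem_compl_leftImage (i : Fin q) : σ (Fin.natAdd p i) ∈ (leftImage σ)ᶜ := by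
  simp only [leftImage, mem_compl, mem_image, mem_univ, true_and, comp_apply,
    σ.injective.eq_iff, not_exists]
  intro j h
  have := congrArg Fin.val h
  rw [Fin.val_castAdd, Fin.val_natAdd] at this
  omega

lemma IsShuffle.comp_castAdd_eq (h : IsShuffle p q σ) :
    σ ∘ Fin.castAdd q = (leftImage σ).orderEmbOfFin (card_leftImage σ) :=
  orderEmbOfFin_unique _ (fun _ => apply_castAdd_mem_leftImage _) (isShuffle_iff.mp h).1

lemma IsShuffle.comp_natAdd_eq (h : IsShuffle p q σ) :
    σ ∘ Fin.natAdd p = (leftImage σ)ᶜ.orderEmbOfFin (card_compl_leftImage σ) :=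
  orderEmbOfFin_unique _ (fun _ => apply_natAdd_mem_compl_leftImage _) (isShuffle_iff.mp h).2

theorem IsShuffle.ext (hσ : IsShuffle p q σ) (hτ : IsShuffle p q τ)
    (h : leftImage σ = leftImage τ) : σ = τ := by
  have hl : σ ∘ Fin.castAdd q = τ ∘ Fin.castAdd q := by
    simp only [hσ.comp_castAdd_eq, hτ.comp_castAdd_eq, h]
  have hr : σ ∘ Fin.natAdd p = τ ∘ Fin.natAdd p := by
    simp only [hσ.comp_natAdd_eq, hτ.comp_natAdd_eq, h]
  ext x
  induction x using Fin.addCases with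
  | left i => exact congrArg Fin.val (congrFun hl i)
  | right i => exact congrArg Fin.val (congrFun hr i)

theorem exists_isShuffle_leftImage_eq (S : Finset (Fin (p + q))) (hS : S.card = p) :
    ∃ σ, IsShuffle p q σ ∧ leftImage σ = S := by
  have hSc : Sᶜ.card = q := by rw [card_compl, hS, Fintype.card_fin, Nat.add_sub_cancel_left]
  set f := S.orderEmbOfFin hS
  set g := Sᶜ.orderEmbOfFin hSc
  have hinj : Injective (Sum.elim f g ∘ finSumFinEquiv.symm) :=
    (f.injective.sumElim g.injective fun i j hij =>
      mem_compl.mp (hij ▸ orderEmbOfFin_mem Sᶜ hSc j) (orderEmbOfFin_mem S hS i)).comp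
      finSumFinEquiv.symm.injective
  set σ := Equiv.ofBijective _ (Finite.injective_iff_bijective.mp hinj)
  have hσl : σ ∘ Fin.castAdd q = f := by ext i; simp [σ]
  have hσr : σ ∘ Fin.natAdd p = g := by ext i; simp [σ]
  refine ⟨σ, isShuffle_iff.mpr ⟨hσl ▸ f.strictMono, hσr ▸ g.strictMono⟩, ?_⟩
  rw [leftImage, hσl, ← coe_inj, coe_image, coe_univ, Set.image_univ, range_orderEmbOfFin]

theorem card_isShuffle :
    Nat.card {σ : Perm (Fin (p + q)) // IsShuffle p q σ} = (p + q).choose p := by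
  have hsubsets : Nat.card {S : Finset (Fin (p + q)) // S.card = p} = (p + q).choose p := by
    rw [Nat.card_eq_fintype_card, Fintype.card_finset_len, Fintype.card_fin]
  rw [← hsubsets]
  refine Nat.card_congr (Equiv.ofBijective (fun σ => ⟨leftImage σ.1, card_leftImage σ.1⟩)
    ⟨fun σ τ h => Subtype.ext (σ.2.ext τ.2 (congrArg Subtype.val h)), fun S => ?_⟩)
  obtain ⟨σ, hσ, hσS⟩ := exists_isShuffle_leftImage_eq S.1 S.2
  exact ⟨⟨σ, hσ⟩, Subtype.ext hσS⟩

end Shuffle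

theorem shPos_add_shNeg (p q : ℕ) : ShPos p q + ShNeg p q = (p + q).choose p := by
  classical
  rw [ShPos, ShNeg, ← Nat.card_sum, ← card_isShuffle]
  refine Nat.card_congr ((subtypeOrEquiv _ _ ?_).symm.trans (subtypeEquivRight fun σ => ?_))
  · simp only [Pi.disjoint_iff, Prop.disjoint_iff]
    rintro σ ⟨⟨-, h1⟩, ⟨-, h2⟩⟩
    exact absurd (h1.symm.trans h2) (by decide)
  · rcases Int.units_eq_one_or (sign σ) with h | h <;> simp [h]

theorem IsShuffle.mul_blockSwap {m : ℕ} {σ : Perm (Fin (m + m))} (h : IsShuffle m m σ) :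
    IsShuffle m m (σ * blockSwap m) := by
  have hl : (σ * blockSwap m) ∘ Fin.castAdd m = σ ∘ Fin.natAdd m := by
    ext i; rw [comp_apply, Perm.mul_apply, blockSwap_apply_castAdd]; rfl
  have hr : (σ * blockSwap m) ∘ Fin.natAdd m = σ ∘ Fin.castAdd m := by
    ext i; rw [comp_apply, Perm.mul_apply, blockSwap_apply_natAdd]; rfl
  rw [isShuffle_iff] at h ⊢
  rw [hl, hr]
  exact h.symm

lemma mul_blockSwap_mul_blockSwap {m : ℕ} (σ : Perm (Fin (m + m))) :
    σ * blockSwap m * blockSwap m = σ := by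
  rw [mul_assoc, blockSwap_mul_self, mul_one]

def mulBlockSwapEquiv (m : ℕ) {s t : ℤˣ} (hst : s * (-1) ^ m = t) :
    {σ : Perm (Fin (m + m)) // IsShuffle m m σ ∧ sign σ = s} ≃
      {σ : Perm (Fin (m + m)) // IsShuffle m m σ ∧ sign σ = t} where
  toFun σ := ⟨σ.1 * blockSwap m, σ.2.1.mul_blockSwap, by
    rw [map_mul, σ.2.2, sign_blockSwap, hst]⟩
  invFun σ := ⟨σ.1 * blockSwap m, σ.2.1.mul_blockSwap, by
    rw [map_mul, σ.2.2, sign_blockSwap, ← hst, mul_assoc, Int.units_mul_self, mul_one]⟩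
  left_inv σ := Subtype.ext (mul_blockSwap_mul_blockSwap σ.1)
  right_inv σ := Subtype.ext (mul_blockSwap_mul_blockSwap σ.1)

theorem even_card_shuffle_sign_eq_of_even {m : ℕ} (hm : 0 < m) (he : Even m) (s : ℤˣ) :
    Even (Nat.card {σ : Perm (Fin (m + m)) // IsShuffle m m σ ∧ sign σ = s}) := by
  have hst : s * (-1) ^ m = s := by rw [he.neg_one_pow, mul_one]
  refine Involutive.even_card_of_forall_ne (f := mulBlockSwapEquiv m hst)
    (fun σ => Subtype.ext (mul_blockSwap_mul_blockSwap σ.1)) fun σ h => ?_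
  exact blockSwap_ne_one hm (mul_eq_left.mp (congrArg Subtype.val h))

theorem shPos_eq_shNeg_of_odd {m : ℕ} (ho : Odd m) : ShPos m m = ShNeg m m :=
  Nat.card_congr (mulBlockSwapEquiv m (by rw [ho.neg_one_pow, one_mul]))

theorem four_dvd_choose_of_odd {m : ℕ} (hm : 1 < m) (ho : Odd m) : 4 ∣ (m + m).choose m := by
  obtain ⟨n, rfl⟩ : ∃ n, m = n + 1 := ⟨m - 1, by omega⟩
  rw [← two_mul, ← Nat.centralBinom_eq_two_mul_choose]
  obtain ⟨k, hk⟩ := Nat.two_dvd_centralBinom_of_one_le (n := n) (by omega)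
  have h4 : 4 ∣ (n + 1) * (n + 1).centralBinom :=
    ⟨(2 * n + 1) * k, by rw [Nat.succ_mul_centralBinom_succ, hk]; ring⟩
  exact (Nat.Coprime.pow_left 2 (Nat.coprime_two_left.mpr ho)).dvd_of_dvd_mul_left h4

/-- For `m ≥ 2`, both `Sh₊(m,m)` and `Sh₋(m,m)` are even. -/
theorem stmt14 (m : ℕ) (hm : 2 ≤ m) : Even (ShPos m m) ∧ Even (ShNeg m m) := by
  rcases Nat.even_or_odd m with he | ho
  · exact ⟨even_card_shuffle_sign_eq_of_even (by omega) he 1,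
      even_card_shuffle_sign_eq_of_even (by omega) he (-1)⟩
  · have hsum := shPos_add_shNeg m m
    have heq := shPos_eq_shNeg_of_odd ho
    obtain ⟨k, hk⟩ := four_dvd_choose_of_odd hm ho
    exact ⟨⟨k, by omega⟩, ⟨k, by omega⟩⟩
end

section
/- For every ℓ ≥ 3, the number Sh₊(2^ℓ − 4, 2) is odd and the number Sh₋(2^ℓ − 4, 2) is even. -/
namespace Stmt16

variable {p : ℕ}

def vp (p : ℕ) : Fin (p + 2) := ⟨p, by omega⟩
def vq (p : ℕ) : Fin (p + 2) := ⟨p + 1, by omega⟩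

/-- flip last bit (valid when `p` is even) -/
def x1 (hp : p % 2 = 0) (v : Fin (p + 2)) : Fin (p + 2) :=
  ⟨if (v : ℕ) % 2 = 0 then v + 1 else v - 1, by
    have := v.isLt; split_ifs with h <;> omega⟩

lemma x1_val (hp : p % 2 = 0) (v : Fin (p + 2)) :
    (x1 hp v : ℕ) = if (v : ℕ) % 2 = 0 then (v : ℕ) + 1 else (v : ℕ) - 1 := rfl

lemma x1_val_even (hp : p % 2 = 0) {v : Fin (p + 2)} (h : (v : ℕ) % 2 = 0) :
    (x1 hp v : ℕ) = (v : ℕ) + 1 := by rw [x1_val]; simp [h]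

lemma x1_val_odd (hp : p % 2 = 0) {v : Fin (p + 2)} (h : (v : ℕ) % 2 = 1) :
    (x1 hp v : ℕ) = (v : ℕ) - 1 := by rw [x1_val]; simp [h]

lemma x1_x1 (hp : p % 2 = 0) (v : Fin (p + 2)) : x1 hp (x1 hp v) = v := by
  have := v.isLt
  apply Fin.ext
  rw [x1_val, x1_val]
  split_ifs <;> omega

lemma x1_ne (hp : p % 2 = 0) (v : Fin (p + 2)) : x1 hp v ≠ v := by
  intro h
  have := congrArg (Fin.val) h
  rw [x1_val] at this
  have := v.isLt
  split_ifs at * <;> omega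

lemma x1_inj (hp : p % 2 = 0) {v w : Fin (p + 2)} (h : x1 hp v = x1 hp w) : v = w := by
  have := congrArg (x1 hp) h
  rwa [x1_x1, x1_x1] at this

lemma pair_cases {i j : Fin (p + 2)} (hij : i < j) (hi : p ≤ (i : ℕ)) :
    i = vp p ∧ j = vq p := by
  have h1 := i.isLt; have h2 := j.isLt
  have : (i : ℕ) < (j : ℕ) := hij
  constructor <;> (apply Fin.ext; simp only [vp, vq]; omega)

lemma shuffle_lt {σ : Equiv.Perm (Fin (p + 2))} (hs : IsShuffle p 2 σ) :
    σ (vp p) < σ (vq p) := by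
  refine hs.2 (vp p) (vq p) ?_ ?_
  · show (p : ℕ) < p + 1; omega
  · exact le_refl _

lemma shuffle_ne {σ : Equiv.Perm (Fin (p + 2))} {i : Fin (p + 2)} (hi : (i : ℕ) < p) :
    σ i ≠ σ (vp p) ∧ σ i ≠ σ (vq p) := by
  constructor <;> intro h <;> have := σ.injective h <;>
    · subst this
      simp only [vp, vq] at hi <;> omega

/-- A `(p,2)`-shuffle is determined by its values at the last two positions. -/
lemma shuffle_unique {σ τ : Equiv.Perm (Fin (p + 2))} (hσ : IsShuffle p 2 σ)
    (hτ : IsShuffle p 2 τ) (h1 : σ (vp p) = τ (vp p)) (h2 : σ (vq p) = τ (vq p)) :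
    σ = τ := by
  have hab : σ (vp p) ≠ σ (vq p) := ne_of_lt (shuffle_lt hσ)
  have hcard : (Finset.univ \ {σ (vp p), σ (vq p)} : Finset (Fin (p + 2))).card = p := by
    rw [Finset.card_sdiff_of_subset (by simp)]
    rw [Finset.card_insert_of_notMem (by simpa using hab)]
    simp
  have key : ∀ (ρ : Equiv.Perm (Fin (p + 2))), IsShuffle p 2 ρ → ρ (vp p) = σ (vp p) →
      ρ (vq p) = σ (vq p) →
      (fun i : Fin p => ρ ⟨(i : ℕ), by omega⟩) =
        (Finset.univ \ {σ (vp p), σ (vq p)}).orderEmbOfFin hcard := by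
    intro ρ hρ hv1 hv2
    apply Finset.orderEmbOfFin_unique hcard
    · intro x
      have hne := shuffle_ne (σ := ρ) (i := (⟨(x : ℕ), by omega⟩ : Fin (p + 2)))
        (by simpa using x.isLt)
      rw [hv1, hv2] at hne
      simp only [Finset.mem_sdiff, Finset.mem_univ, Finset.mem_insert, Finset.mem_singleton,
        true_and]
      push_neg
      exact hne
    · intro x y hxy
      exact hρ.1 _ _ (by simpa using hxy) (by simpa using y.isLt)
  have kσ := key σ hσ rfl rfl
  have kτ := key τ hτ h1.symm h2.symm
  apply Equiv.ext
  intro x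
  rcases lt_trichotomy (x : ℕ) p with h | h | h
  · have := congrFun (kσ.trans kτ.symm) ⟨(x : ℕ), h⟩
    simpa using this
  · have hx : x = vp p := Fin.ext h
    rw [hx, h1]
  · have hx : x = vq p := Fin.ext (by have := x.isLt; simp only [vq]; omega)
    rw [hx, h2]


/-- The sign-preserving involution on `(p,2)`-shuffles. -/
def fp (hp : p % 2 = 0) (σ : Equiv.Perm (Fin (p + 2))) : Equiv.Perm (Fin (p + 2)) :=
  Equiv.swap (σ (vp p)) (x1 hp (σ (vp p))) * Equiv.swap (σ (vq p)) (x1 hp (σ (vq p))) * σ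

section fp

variable (hp : p % 2 = 0) {σ : Equiv.Perm (Fin (p + 2))}

/-- the easy case: if `σ (vq) = x1 (σ vp)` the two swaps cancel. -/
lemma fp_eq_self (hd : σ (vq p) = x1 hp (σ (vp p))) : fp hp σ = σ := by
  rw [fp, hd, x1_x1, Equiv.swap_comm (x1 hp (σ (vp p))) (σ (vp p)), Equiv.swap_mul_self,
    one_mul]

/-- value analysis of the product of the two swaps on a point off `{a, b}`,
in the case where the two swaps are disjoint. -/
lemma g_spec (hab : σ (vp p) ≠ σ (vq p)) (hd : σ (vq p) ≠ x1 hp (σ (vp p)))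
    (x : Fin (p + 2)) (hx1 : x ≠ σ (vp p)) (hx2 : x ≠ σ (vq p)) :
    (Equiv.swap (σ (vp p)) (x1 hp (σ (vp p))) * Equiv.swap (σ (vq p)) (x1 hp (σ (vq p)))) x = x ∨
    (((Equiv.swap (σ (vp p)) (x1 hp (σ (vp p))) *
        Equiv.swap (σ (vq p)) (x1 hp (σ (vq p)))) x = σ (vp p) ∨
      (Equiv.swap (σ (vp p)) (x1 hp (σ (vp p))) *
        Equiv.swap (σ (vq p)) (x1 hp (σ (vq p)))) x = σ (vq p)) ∧
     (((Equiv.swap (σ (vp p)) (x1 hp (σ (vp p))) *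
        Equiv.swap (σ (vq p)) (x1 hp (σ (vq p)))) x : ℕ) = (x : ℕ) + 1 ∨
      ((x : ℕ) = ((Equiv.swap (σ (vp p)) (x1 hp (σ (vp p))) *
        Equiv.swap (σ (vq p)) (x1 hp (σ (vq p)))) x : ℕ) + 1))) := by
  set a := σ (vp p)
  set b := σ (vq p)
  have hd' : a ≠ x1 hp b := fun h => hd (by rw [h, x1_x1])
  have adj : ∀ v : Fin (p + 2), ((x1 hp v : ℕ) = (v : ℕ) + 1 ∨ (v : ℕ) = (x1 hp v : ℕ) + 1) := by
    intro v
    have hv := v.isLt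
    rw [x1_val]
    rcases Nat.mod_two_eq_zero_or_one (v : ℕ) with h | h <;> simp [h] <;> omega
  simp only [Equiv.Perm.mul_apply]
  by_cases hxb : x = x1 hp b
  · rw [hxb, Equiv.swap_apply_right, Equiv.swap_apply_of_ne_of_ne (Ne.symm hab) hd]
    right
    refine ⟨Or.inr rfl, ?_⟩
    rcases adj b with h | h
    · right; exact h
    · left; exact h
  · rw [Equiv.swap_apply_of_ne_of_ne hx2 hxb]
    by_cases hxa : x = x1 hp a
    · have : Equiv.swap b (x1 hp b) x = x := Equiv.swap_apply_of_ne_of_ne hx2 hxb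
      rw [hxa] at this ⊢
      rw [Equiv.swap_apply_right]
      right
      refine ⟨Or.inl rfl, ?_⟩
      rcases adj a with h | h
      · right; exact h
      · left; exact h
    · rw [Equiv.swap_apply_of_ne_of_ne hx1 hxa]
      exact Or.inl rfl

/-- in the disjoint case, `fp σ` is a shuffle with last-block values `x1 a < x1 b`. -/
lemma fp_shuffle (hs : IsShuffle p 2 σ) (hd : σ (vq p) ≠ x1 hp (σ (vp p))) :
    IsShuffle p 2 (fp hp σ) ∧ fp hp σ (vp p) = x1 hp (σ (vp p)) ∧
      fp hp σ (vq p) = x1 hp (σ (vq p)) := by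
  set a := σ (vp p) with ha_def
  set b := σ (vq p) with hb_def
  have hab : a < b := shuffle_lt hs
  have hab' : a ≠ b := ne_of_lt hab
  have hd' : a ≠ x1 hp b := fun h => hd (by rw [h, x1_x1])
  have hval_p : fp hp σ (vp p) = x1 hp a := by
    rw [fp]
    simp only [Equiv.Perm.mul_apply, ← ha_def]
    rw [Equiv.swap_apply_of_ne_of_ne hab' hd', Equiv.swap_apply_left]
  have hval_q : fp hp σ (vq p) = x1 hp b := by
    rw [fp]
    simp only [Equiv.Perm.mul_apply, ← hb_def]
    rw [Equiv.swap_apply_left,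
      Equiv.swap_apply_of_ne_of_ne (Ne.symm hd') (fun h => hab' (x1_inj hp h).symm)]
  refine ⟨⟨?_, ?_⟩, hval_p, hval_q⟩
  · intro i j hij hj
    have hi : (i : ℕ) < p := lt_trans hij hj
    have h1 := shuffle_ne (σ := σ) hi
    have h2 := shuffle_ne (σ := σ) hj
    have hlt : σ i < σ j := hs.1 i j hij hj
    have s1 := g_spec hp hab' hd (σ i) h1.1 h1.2
    have s2 := g_spec hp hab' hd (σ j) h2.1 h2.2
    have hinj : (fp hp σ) i ≠ (fp hp σ) j := by
      intro h
      exact (Fin.lt_irrefl i) ((Equiv.injective _ h) ▸ hij)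
    show (fp hp σ) i < (fp hp σ) j
    have e1 : (fp hp σ) i = (Equiv.swap a (x1 hp a) * Equiv.swap b (x1 hp b)) (σ i) := rfl
    have e2 : (fp hp σ) j = (Equiv.swap a (x1 hp a) * Equiv.swap b (x1 hp b)) (σ j) := rfl
    rw [e1, e2] at hinj ⊢
    set y1 := (Equiv.swap a (x1 hp a) * Equiv.swap b (x1 hp b)) (σ i)
    set y2 := (Equiv.swap a (x1 hp a) * Equiv.swap b (x1 hp b)) (σ j)
    -- transfer everything to ℕ
    have hia := Fin.val_ne_iff.mpr h1.1
    have hib := Fin.val_ne_iff.mpr h1.2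
    have hja := Fin.val_ne_iff.mpr h2.1
    have hjb := Fin.val_ne_iff.mpr h2.2
    have hltv : (σ i : ℕ) < (σ j : ℕ) := hlt
    have hinjv : (y1 : ℕ) ≠ (y2 : ℕ) := Fin.val_ne_iff.mpr hinj
    have n1 : (y1 : ℕ) = (σ i : ℕ) ∨ (((y1 : ℕ) = (a : ℕ) ∨ (y1 : ℕ) = (b : ℕ)) ∧
        ((y1 : ℕ) = (σ i : ℕ) + 1 ∨ (σ i : ℕ) = (y1 : ℕ) + 1)) := by
      rcases s1 with h | ⟨hm, ha⟩
      · exact Or.inl (congrArg Fin.val h)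
      · exact Or.inr ⟨hm.imp (congrArg Fin.val) (congrArg Fin.val), ha⟩
    have n2 : (y2 : ℕ) = (σ j : ℕ) ∨ (((y2 : ℕ) = (a : ℕ) ∨ (y2 : ℕ) = (b : ℕ)) ∧
        ((y2 : ℕ) = (σ j : ℕ) + 1 ∨ (σ j : ℕ) = (y2 : ℕ) + 1)) := by
      rcases s2 with h | ⟨hm, ha⟩
      · exact Or.inl (congrArg Fin.val h)
      · exact Or.inr ⟨hm.imp (congrArg Fin.val) (congrArg Fin.val), ha⟩
    show (y1 : ℕ) < (y2 : ℕ)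
    omega
  · intro i j hij hi
    obtain ⟨rfl, rfl⟩ := pair_cases hij hi
    rw [hval_p, hval_q]
    show (x1 hp a : ℕ) < (x1 hp b : ℕ)
    have h1 := a.isLt; have h2 := b.isLt
    have habv : (a : ℕ) < (b : ℕ) := hab
    have hdv : (b : ℕ) ≠ (x1 hp a : ℕ) := Fin.val_ne_iff.mpr hd
    rcases Nat.mod_two_eq_zero_or_one (a : ℕ) with h | h <;>
      rcases Nat.mod_two_eq_zero_or_one (b : ℕ) with h' | h' <;>
      [rw [x1_val_even hp h, x1_val_even hp h'] at *;
       rw [x1_val_even hp h, x1_val_odd hp h'] at *;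
       rw [x1_val_odd hp h, x1_val_even hp h'] at *;
       rw [x1_val_odd hp h, x1_val_odd hp h'] at *] <;> omega

lemma fp_sign (σ : Equiv.Perm (Fin (p + 2))) :
    Equiv.Perm.sign (fp hp σ) = Equiv.Perm.sign σ := by
  rw [fp, map_mul, map_mul, Equiv.Perm.sign_swap (Ne.symm (x1_ne hp _)),
    Equiv.Perm.sign_swap (Ne.symm (x1_ne hp _))]
  simp

lemma fp_invol (hs : IsShuffle p 2 σ) : fp hp (fp hp σ) = σ := by
  by_cases hd : σ (vq p) = x1 hp (σ (vp p))
  · rw [fp_eq_self hp hd, fp_eq_self hp hd]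
  · obtain ⟨_, hv1, hv2⟩ := fp_shuffle hp hs hd
    have hdisj : (Equiv.swap (σ (vp p)) (x1 hp (σ (vp p)))).Disjoint
        (Equiv.swap (σ (vq p)) (x1 hp (σ (vq p)))) := by
      have hab : σ (vp p) ≠ σ (vq p) := ne_of_lt (shuffle_lt hs)
      have hd' : σ (vp p) ≠ x1 hp (σ (vq p)) := fun h => hd (by rw [h, x1_x1])
      intro x
      by_cases h1 : x = σ (vp p)
      · right; subst h1; exact Equiv.swap_apply_of_ne_of_ne hab hd'
      · by_cases h2 : x = x1 hp (σ (vp p))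
        · right; subst h2
          exact Equiv.swap_apply_of_ne_of_ne (fun h => hd h.symm)
            (fun h => hab (x1_inj hp h))
        · left; exact Equiv.swap_apply_of_ne_of_ne h1 h2
    rw [fp, hv1, hv2, x1_x1, x1_x1]
    set A := Equiv.swap (σ (vp p)) (x1 hp (σ (vp p))) with hA
    set B := Equiv.swap (σ (vq p)) (x1 hp (σ (vq p))) with hB
    have hA' : Equiv.swap (x1 hp (σ (vp p))) (σ (vp p)) = A := by
      rw [hA, Equiv.swap_comm]
    have hB' : Equiv.swap (x1 hp (σ (vq p))) (σ (vq p)) = B := by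
      rw [hB, Equiv.swap_comm]
    rw [hA', hB']
    have hc := hdisj.commute
    have key : A * B * (A * B) = 1 := by
      rw [mul_assoc A B (A * B), ← mul_assoc B A B, ← hc.eq, mul_assoc A B B,
        Equiv.swap_mul_self, mul_one, hA, Equiv.swap_mul_self]
    rw [show fp hp σ = A * B * σ from rfl, ← mul_assoc, key, one_mul]

/-- `fp` fixes `σ` iff `σ (vq) = x1 (σ vp)`. -/
lemma fp_fix_iff (hs : IsShuffle p 2 σ) :
    fp hp σ = σ ↔ σ (vq p) = x1 hp (σ (vp p)) := by
  constructor
  · intro h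
    by_contra hd
    obtain ⟨_, hv1, _⟩ := fp_shuffle hp hs hd
    rw [h] at hv1
    exact x1_ne hp _ hv1.symm
  · exact fp_eq_self hp

end fp

/-- the cycle `(a, a+1, …, p+1)` as a permutation of `Fin (p+2)`. -/
def eP (a : Fin (p + 2)) : Equiv.Perm (Fin (p + 2)) where
  toFun x := ⟨if (x : ℕ) = p + 1 then a else if (x : ℕ) < a then x else x + 1, by
    have := x.isLt; have := a.isLt; split_ifs <;> omega⟩
  invFun y := ⟨if (y : ℕ) = a then p + 1 else if (y : ℕ) < a then y else y - 1, by
    have := y.isLt; have := a.isLt; split_ifs <;> omega⟩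
  left_inv x := by
    have := x.isLt; have := a.isLt
    apply Fin.ext
    simp only
    split_ifs <;> omega
  right_inv y := by
    have := y.isLt; have := a.isLt
    apply Fin.ext
    simp only
    split_ifs <;> omega

lemma eP_val (a x : Fin (p + 2)) :
    (eP a x : ℕ) = if (x : ℕ) = p + 1 then (a : ℕ) else if (x : ℕ) < (a : ℕ) then (x : ℕ)
      else (x : ℕ) + 1 := rfl

/-- the special shuffle `σₐ`, a square (hence of sign `1`), with `σₐ(vp) = a`,
`σₐ(vq) = a + 1`. -/
def sq (a : Fin (p + 2)) : Equiv.Perm (Fin (p + 2)) := eP a * eP a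

lemma sq_sign (a : Fin (p + 2)) : Equiv.Perm.sign (sq a) = 1 := by
  rw [sq, map_mul, Int.units_mul_self]

lemma sq_val (a x : Fin (p + 2)) :
    (sq a x : ℕ) = if (x : ℕ) = p + 1 then
        (if (a : ℕ) = p + 1 then (a : ℕ) else if (a : ℕ) < (a : ℕ) then (a : ℕ)
          else (a : ℕ) + 1)
      else if (x : ℕ) < a then (x : ℕ)
      else if (x : ℕ) + 1 = p + 1 then a
      else (x : ℕ) + 2 := by
  show (eP a (eP a x) : ℕ) = _
  rw [eP_val, eP_val]
  have := x.isLt; have := a.isLt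
  split_ifs <;> omega

lemma sq_vp (a : Fin (p + 2)) (ha : (a : ℕ) ≤ p) : sq a (vp p) = a := by
  apply Fin.ext
  rw [sq_val]
  have hvp : ((vp p) : ℕ) = p := rfl
  have := a.isLt
  split_ifs <;> omega

lemma sq_vq (a : Fin (p + 2)) (ha : (a : ℕ) ≤ p) : (sq a (vq p) : ℕ) = (a : ℕ) + 1 := by
  rw [sq_val]
  have hvq : ((vq p) : ℕ) = p + 1 := rfl
  have := a.isLt
  split_ifs <;> omega

lemma sq_shuffle (a : Fin (p + 2)) (ha : (a : ℕ) ≤ p) : IsShuffle p 2 (sq a) := by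
  constructor
  · intro i j hij hj
    have hi : (i : ℕ) < p := lt_trans hij hj
    have hijv : (i : ℕ) < (j : ℕ) := hij
    show (sq a i : ℕ) < (sq a j : ℕ)
    rw [sq_val, sq_val]
    have := a.isLt
    split_ifs <;> omega
  · intro i j hij hi
    obtain ⟨rfl, rfl⟩ := pair_cases hij hi
    show (sq a (vp p) : ℕ) < (sq a (vq p) : ℕ)
    rw [sq_vp a ha, sq_vq a ha]
    omega

section count

lemma fp_shuffle' (hp : p % 2 = 0) {σ : Equiv.Perm (Fin (p + 2))} (hs : IsShuffle p 2 σ) :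
    IsShuffle p 2 (fp hp σ) := by
  by_cases hd : σ (vq p) = x1 hp (σ (vp p))
  · rw [fp_eq_self hp hd]; exact hs
  · exact (fp_shuffle hp hs hd).1

lemma even_le (hp : p % 2 = 0) (a : Fin (p + 2)) (ha : (a : ℕ) % 2 = 0) : (a : ℕ) ≤ p := by
  have := a.isLt; omega

/-- a fixed point of `fp` equals `sq (σ (vp p))`, and `σ (vp p)` is even. -/
lemma fix_eq_sq (hp : p % 2 = 0) {σ : Equiv.Perm (Fin (p + 2))} (hs : IsShuffle p 2 σ)
    (hfix : fp hp σ = σ) : (σ (vp p) : ℕ) % 2 = 0 ∧ σ = sq (σ (vp p)) := by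
  have hq := (fp_fix_iff hp hs).mp hfix
  have hlt : (σ (vp p) : ℕ) < (σ (vq p) : ℕ) := shuffle_lt hs
  have heven : (σ (vp p) : ℕ) % 2 = 0 := by
    rcases Nat.mod_two_eq_zero_or_one (σ (vp p) : ℕ) with h | h
    · exact h
    · exfalso
      have := congrArg Fin.val hq
      rw [x1_val_odd hp h] at this
      omega
  have hle : (σ (vp p) : ℕ) ≤ p := even_le hp _ heven
  refine ⟨heven, shuffle_unique hs (sq_shuffle _ hle) ?_ ?_⟩
  · exact (sq_vp _ hle).symm
  · apply Fin.ext
    rw [sq_vq _ hle]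
    have := congrArg Fin.val hq
    rw [x1_val_even hp heven] at this
    exact this

lemma sq_fix (hp : p % 2 = 0) (a : Fin (p + 2)) (ha : (a : ℕ) % 2 = 0) : fp hp (sq a) = sq a := by
  have hle : (a : ℕ) ≤ p := even_le hp a ha
  apply fp_eq_self hp
  apply Fin.ext
  rw [sq_vq _ hle, x1_val, sq_vp _ hle]
  simp [ha]

/-- the parity of the even-sign shuffle count. -/
lemma shpos_mod (hp : p % 2 = 0) : ShPos p 2 % 2 = ((p + 2) / 2) % 2 := by
  classical
  set S := {σ : Equiv.Perm (Fin (p + 2)) // IsShuffle p 2 σ ∧ Equiv.Perm.sign σ = 1} with hS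
  set F : Function.End S := fun s =>
    ⟨fp hp s.1, fp_shuffle' hp s.2.1, by rw [fp_sign]; exact s.2.2⟩ with hF
  have hF2 : F ^ 2 ^ 1 = 1 := by
    rw [pow_one, pow_two]
    funext s
    show F (F s) = s
    apply Subtype.ext
    show fp hp (fp hp s.1) = s.1
    exact fp_invol hp s.2.1
  have hmod := Equiv.Perm.card_fixedPoints_modEq (p := 2) (n := 1) hF2
  -- identify the fixed points with the even elements of `Fin (p+2)`
  have e1 : Function.fixedPoints F ≃ {a : Fin (p + 2) // (a : ℕ) % 2 = 0} :=
    { toFun := fun x => ⟨x.1.1 (vp p), (fix_eq_sq hp x.1.2.1 (Subtype.ext_iff.mp x.2)).1⟩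
      invFun := fun a =>
        ⟨⟨sq a.1, sq_shuffle _ (even_le hp _ a.2), sq_sign _⟩,
          Subtype.ext (sq_fix hp a.1 a.2)⟩
      left_inv := fun x => by
        apply Subtype.ext
        apply Subtype.ext
        exact ((fix_eq_sq hp x.1.2.1 (Subtype.ext_iff.mp x.2)).2).symm
      right_inv := fun a => by
        apply Subtype.ext
        exact sq_vp a.1 (even_le hp _ a.2) }
  have e2 : {a : Fin (p + 2) // (a : ℕ) % 2 = 0} ≃ Fin ((p + 2) / 2) :=
    { toFun := fun a => ⟨(a : ℕ) / 2, by have := a.1.isLt; have := a.2; omega⟩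
      invFun := fun i => ⟨⟨2 * (i : ℕ), by have := i.isLt; omega⟩, by
        show (2 * (i : ℕ)) % 2 = 0; omega⟩
      left_inv := fun a => by
        apply Subtype.ext; apply Fin.ext
        have := a.2
        show 2 * ((a : ℕ) / 2) = (a : ℕ)
        omega
      right_inv := fun i => by
        apply Fin.ext
        show (2 * (i : ℕ)) / 2 = (i : ℕ)
        omega }
  have hcard : Fintype.card (Function.fixedPoints F) = (p + 2) / 2 := by
    rw [Fintype.card_congr (e1.trans e2), Fintype.card_fin]
  have : ShPos p 2 = Fintype.card S := by
    rw [ShPos, Nat.card_eq_fintype_card]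
  rw [this, ← hcard]
  unfold Nat.ModEq at hmod
  exact hmod

/-- the odd-sign shuffle count is even. -/
lemma shneg_mod (hp : p % 2 = 0) : ShNeg p 2 % 2 = 0 := by
  classical
  set S := {σ : Equiv.Perm (Fin (p + 2)) // IsShuffle p 2 σ ∧ Equiv.Perm.sign σ = -1} with hS
  set F : Function.End S := fun s =>
    ⟨fp hp s.1, fp_shuffle' hp s.2.1, by rw [fp_sign]; exact s.2.2⟩ with hF
  have hF2 : F ^ 2 ^ 1 = 1 := by
    rw [pow_one, pow_two]
    funext s
    show F (F s) = s
    apply Subtype.ext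
    show fp hp (fp hp s.1) = s.1
    exact fp_invol hp s.2.1
  have hmod := Equiv.Perm.card_fixedPoints_modEq (p := 2) (n := 1) hF2
  have hempty : IsEmpty (Function.fixedPoints F) := by
    refine ⟨fun x => ?_⟩
    have h := fix_eq_sq hp x.1.2.1 (Subtype.ext_iff.mp x.2)
    have hsgn := x.1.2.2
    rw [h.2, sq_sign] at hsgn
    exact absurd hsgn (by decide)
  have hcard : Fintype.card (Function.fixedPoints F) = 0 := Fintype.card_eq_zero
  have : ShNeg p 2 = Fintype.card S := by
    rw [ShNeg, Nat.card_eq_fintype_card]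
  rw [this]
  unfold Nat.ModEq at hmod
  rw [hcard] at hmod
  simpa using hmod

end count

end Stmt16


/-- For `ℓ ≥ 3`, `Sh₊(2^ℓ − 4, 2)` is odd and `Sh₋(2^ℓ − 4, 2)` is even. -/
theorem stmt16 (ℓ : ℕ) (hℓ : 3 ≤ ℓ) :
    Odd (ShPos (2 ^ ℓ - 4) 2) ∧ Even (ShNeg (2 ^ ℓ - 4) 2) := by
  have hk : 2 ≤ 2 ^ (ℓ - 2) := by
    calc 2 = 2 ^ 1 := rfl
    _ ≤ 2 ^ (ℓ - 2) := Nat.pow_le_pow_right (by norm_num) (by omega)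
  have hexp : 2 ^ ℓ = 4 * 2 ^ (ℓ - 2) := by
    conv_lhs => rw [show ℓ = (ℓ - 2) + 2 by omega]
    rw [pow_add]; ring
  have hp : (2 ^ ℓ - 4) % 2 = 0 := by omega
  constructor
  · rw [Nat.odd_iff, Stmt16.shpos_mod hp]
    omega
  · rw [Nat.even_iff]
    exact Stmt16.shneg_mod hp
end
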